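/- arXiv:2312.04797 — 3 statements merged into one kernel-verified Lean document; each statement's English description precedes it below -/
import Mathlib

section
/- For every integer n ≥ 3 with n ≠ 5, the cycle C_n satisfies m_{C_n}[0,1) ≤ ν(C_n) − 1, i.e. the number of signless Laplacian eigenvalues of C_n in [0,1) is at most its matching number minus one. -/
open Matrix

/-- The signless Laplacian matrix of a finite simple graph: the diagonal degree matrix
plus the adjacency matrix. -/
noncomputable def sLap {V : Type*} [Fintype V] [DecidableEq V] (G : SimpleGraph V) :
    Matrix V V ℝ :=
  letI := Classical.decRel G.Adj
  Matrix.diagonal (fun v => (G.degree v : ℝ)) + G.adjMatrix ℝ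

/-- The multiset of signless Laplacian eigenvalues of `G`, i.e. the roots (with
multiplicity) of the characteristic polynomial of the signless Laplacian matrix. -/
noncomputable def qSpec {V : Type*} [Fintype V] [DecidableEq V] (G : SimpleGraph V) :
    Multiset ℝ :=
  (sLap G).charpoly.roots

/-- The number of signless Laplacian eigenvalues of `G` lying in `I`, counted with
multiplicity. -/
noncomputable def qCount {V : Type*} [Fintype V] [DecidableEq V] (G : SimpleGraph V)
    (I : Set ℝ) : ℕ :=
  letI := Classical.decPred fun x : ℝ => x ∈ I
  Multiset.countP (fun x => x ∈ I) (qSpec G)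

/-- The `k`-th largest signless Laplacian eigenvalue of `G` (1-indexed), i.e. `q_k(G)`:
the entry at position `card V - k` of the list of eigenvalues sorted in nondecreasing
order. -/
noncomputable def qEig {V : Type*} [Fintype V] [DecidableEq V] (G : SimpleGraph V)
    (k : ℕ) : ℝ :=
  ((qSpec G).sort (· ≤ ·)).getD (Fintype.card V - k) 0

/-- The matching number `ν(G)` of `G`: the number of edges of a maximum matching. -/
noncomputable def matchingNumber {V : Type*} [Fintype V] (G : SimpleGraph V) : ℕ :=
  sSup {k | ∃ M : G.Subgraph, M.IsMatching ∧ M.edgeSet.ncard = k}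

/-- The independence number `α(G)` of `G`: the maximum size of a set of pairwise
nonadjacent vertices. -/
noncomputable def indepNum {V : Type*} [Fintype V] (G : SimpleGraph V) : ℕ :=
  sSup {k | ∃ s : Finset V, (∀ u ∈ s, ∀ v ∈ s, ¬ G.Adj u v) ∧ s.card = k}

open Polynomial Complex

open Fin.CommRing in
lemma cycle_adj_iff (m : ℕ) (j l : Fin (m + 3)) :
    (SimpleGraph.cycleGraph (m + 3)).Adj j l ↔ (l = j - 1 ∨ l = j + 1) := by
  rw [SimpleGraph.cycleGraph_adj (n := m + 1)]
  constructor
  · rintro (h | h)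
    · left; linear_combination -h
    · right; linear_combination h
  · rintro (h | h)
    · left; linear_combination -h
    · right; linear_combination h

open Fin.CommRing in
lemma sLap_cycle_apply (m : ℕ) (j l : Fin (m + 3)) :
    sLap (SimpleGraph.cycleGraph (m + 3)) j l =
      (if l = j then 2 else 0) +
        ((if l = j - 1 then 1 else 0) + (if l = j + 1 then 1 else 0)) := by
  classical
  have hdeg : ∀ (inst : Fintype ((SimpleGraph.cycleGraph (m + 3)).neighborSet j)),
      @SimpleGraph.degree _ (SimpleGraph.cycleGraph (m + 3)) j inst = 2 := by
    intro inst
    rw [Subsingleton.elim inst (SimpleGraph.neighborSetFintype _ j)]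
    exact SimpleGraph.cycleGraph_degree_three_le
  have hval2 : ((2 : Fin (m + 3)) : ℕ) = 2 := rfl
  have hval1 : ((1 : Fin (m + 3)) : ℕ) = 1 := rfl
  have hne1 : j - 1 ≠ j + 1 := by
    intro h
    have h2 : (2 : Fin (m + 3)) = 0 := by linear_combination -h
    have := congrArg Fin.val h2
    rw [hval2] at this
    simp at this
  have hne2 : j ≠ j - 1 := by
    intro h
    have h2 : (1 : Fin (m + 3)) = 0 := by linear_combination h
    have := congrArg Fin.val h2
    rw [hval1] at this
    simp at this
  have hne3 : j ≠ j + 1 := by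
    intro h
    have h2 : (1 : Fin (m + 3)) = 0 := by linear_combination -h
    have := congrArg Fin.val h2
    rw [hval1] at this
    simp at this
  rw [sLap]
  simp only [Matrix.add_apply, Matrix.diagonal_apply, SimpleGraph.adjMatrix_apply,
    cycle_adj_iff]
  by_cases h1 : l = j
  · subst h1
    rw [if_pos rfl, if_pos rfl, if_neg hne2, if_neg hne3,
      if_neg (by rintro (h | h); exacts [hne2 h, hne3 h])]
    rw [hdeg]
    norm_num
  · rw [if_neg (Ne.symm h1), if_neg h1]
    by_cases h2 : l = j - 1
    · rw [if_pos h2, if_pos (Or.inl h2), if_neg (by rw [h2]; exact hne1)]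
      norm_num
    · rw [if_neg h2]
      by_cases h3 : l = j + 1
      · rw [if_pos h3, if_pos (Or.inr h3)]; norm_num
      · rw [if_neg h3, if_neg (by rintro (h | h); exacts [h2 h, h3 h])]; norm_num

noncomputable def zetaC (m : ℕ) : ℂ := Complex.exp (2 * Real.pi * Complex.I / (m + 3))

lemma zetaC_prim (m : ℕ) : IsPrimitiveRoot (zetaC m) (m + 3) := by
  have := Complex.isPrimitiveRoot_exp (m + 3) (by omega)
  simpa [zetaC] using this

lemma zetaC_pow_n (m : ℕ) : zetaC m ^ (m + 3) = 1 := (zetaC_prim m).pow_eq_one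

lemma zetaC_pow_mod (m : ℕ) (a : ℕ) : zetaC m ^ a = zetaC m ^ (a % (m + 3)) := by
  conv_lhs => rw [← Nat.div_add_mod a (m + 3)]
  rw [pow_add, pow_mul, zetaC_pow_n, one_pow, one_mul]

lemma zetaC_pow_mod_mul (m : ℕ) (a b : ℕ) :
    zetaC m ^ (a % (m + 3) * b) = zetaC m ^ (a * b) := by
  rw [zetaC_pow_mod m (a % (m + 3) * b), zetaC_pow_mod m (a * b),
    Nat.mul_mod, Nat.mod_mod_of_dvd _ dvd_rfl, ← Nat.mul_mod]

noncomputable def dftP (m : ℕ) : Matrix (Fin (m + 3)) (Fin (m + 3)) ℂ :=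
  Matrix.of fun j k => zetaC m ^ (j.val * k.val)

noncomputable def eigC (m : ℕ) : Fin (m + 3) → ℂ :=
  fun k => 2 + zetaC m ^ (k.val) + zetaC m ^ ((m + 2) * k.val)

lemma key_mul (m : ℕ) :
    (sLap (SimpleGraph.cycleGraph (m + 3))).map (algebraMap ℝ ℂ) * dftP m =
      dftP m * Matrix.diagonal (eigC m) := by
  ext j k
  rw [Matrix.mul_apply, Matrix.mul_diagonal]
  have hentry : ∀ l, (sLap (SimpleGraph.cycleGraph (m + 3))).map (algebraMap ℝ ℂ) j l =
      (if l = j then 2 else 0) + ((if l = j - 1 then 1 else 0) + (if l = j + 1 then 1 else 0)) := by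
    intro l
    rw [Matrix.map_apply, sLap_cycle_apply]
    push_cast [apply_ite (algebraMap ℝ ℂ)]
    norm_num
  simp only [hentry, add_mul, Finset.sum_add_distrib, ite_mul, zero_mul, one_mul,
    Finset.sum_ite_eq', Finset.mem_univ, if_true]
  have h1 : dftP m (j + 1) k = dftP m j k * zetaC m ^ (k.val) := by
    show zetaC m ^ ((j + 1).val * k.val) = zetaC m ^ (j.val * k.val) * zetaC m ^ (k.val)
    rw [Fin.add_def]
    show zetaC m ^ ((j.val + (1 : Fin (m + 3)).val) % (m + 3) * k.val) = _
    rw [show ((1 : Fin (m + 3)) : ℕ) = 1 from rfl, zetaC_pow_mod_mul, add_mul, one_mul, pow_add]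
  have h2 : dftP m (j - 1) k = dftP m j k * zetaC m ^ ((m + 2) * k.val) := by
    show zetaC m ^ ((j - 1).val * k.val) = zetaC m ^ (j.val * k.val) * zetaC m ^ ((m + 2) * k.val)
    rw [Fin.sub_def]
    show zetaC m ^ ((m + 3 - (1 : Fin (m + 3)).val + j.val) % (m + 3) * k.val) = _
    rw [show ((1 : Fin (m + 3)) : ℕ) = 1 from rfl, zetaC_pow_mod_mul,
      show m + 3 - 1 + j.val = j.val + (m + 2) by omega, add_mul, pow_add]
  rw [h1, h2, eigC]
  ring

lemma detP_ne (m : ℕ) : (dftP m).det ≠ 0 := by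
  have : dftP m = Matrix.vandermonde (fun j : Fin (m + 3) => zetaC m ^ (j.val)) := by
    ext j k
    simp [dftP, Matrix.vandermonde_apply, pow_mul]
  rw [this]
  refine Matrix.det_vandermonde_ne_zero_iff.mpr ?_
  intro j k h
  exact Fin.ext ((zetaC_prim m).pow_inj j.isLt k.isLt h)

lemma charpoly_diagonal {n : Type*} [Fintype n] [DecidableEq n] {R : Type*} [CommRing R]
    (d : n → R) :
    (Matrix.diagonal d).charpoly = ∏ i, (Polynomial.X - Polynomial.C (d i)) := by
  rw [Matrix.charpoly]
  have : (Matrix.diagonal d).charmatrix =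
      Matrix.diagonal (fun i => Polynomial.X - Polynomial.C (d i)) := by
    ext i j
    by_cases h : i = j
    · subst h; simp
    · rw [Matrix.charmatrix_apply_ne _ _ _ h, Matrix.diagonal_apply_ne _ h,
        Matrix.diagonal_apply_ne _ h]
      simp
  rw [this, Matrix.det_diagonal]

lemma charpolyC_eq (m : ℕ) :
    ((sLap (SimpleGraph.cycleGraph (m + 3))).map (algebraMap ℝ ℂ)).charpoly =
      ∏ k : Fin (m + 3), (Polynomial.X - Polynomial.C (eigC m k)) := by
  classical
  set Qc := (sLap (SimpleGraph.cycleGraph (m + 3))).map (algebraMap ℝ ℂ) with hQc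
  set P := dftP m
  set D := Matrix.diagonal (eigC m)
  have hPC : (P.map (Polynomial.C : ℂ →+* ℂ[X])).det ≠ 0 := by
    rw [show P.map (Polynomial.C : ℂ →+* ℂ[X]) =
      (Polynomial.C : ℂ →+* ℂ[X]).mapMatrix P from rfl, ← RingHom.map_det]
    simpa using detP_ne m
  have hcomm : Qc.charmatrix * P.map Polynomial.C = P.map Polynomial.C * D.charmatrix := by
    rw [Matrix.charmatrix, Matrix.charmatrix]
    simp only [RingHom.mapMatrix_apply]
    rw [sub_mul, mul_sub, ← Matrix.map_mul, ← Matrix.map_mul, key_mul]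
    congr 1
    exact (Matrix.scalar_commute _ (fun r => Commute.all _ r) _)
  have hdet := congrArg Matrix.det hcomm
  rw [Matrix.det_mul, Matrix.det_mul] at hdet
  have : Qc.charpoly * (P.map Polynomial.C).det = D.charpoly * (P.map Polynomial.C).det := by
    rw [Matrix.charpoly, Matrix.charpoly, hdet]; ring
  have := mul_right_cancel₀ hPC this
  rw [this, _root_.charpoly_diagonal]

lemma eigC_eq_real (m : ℕ) (k : Fin (m + 3)) :
    eigC m k = ((2 + 2 * Real.cos (2 * Real.pi * k.val / (m + 3)) : ℝ) : ℂ) := by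
  have hn0 : ((m : ℂ) + 3) ≠ 0 := by
    intro h
    rw [show ((m : ℂ) + 3) = ((m + 3 : ℕ) : ℂ) by push_cast; ring] at h
    exact absurd (Nat.cast_eq_zero.mp h) (by omega)
  set θ : ℝ := 2 * Real.pi * k.val / (m + 3) with hθ
  have h1 : zetaC m ^ (k.val : ℕ) = Complex.exp ((θ : ℂ) * Complex.I) := by
    rw [zetaC, ← Complex.exp_nat_mul]
    congr 1
    rw [hθ]
    push_cast
    field_simp
  have h2 : zetaC m ^ ((m + 2) * k.val) = Complex.exp ((-θ : ℝ) * Complex.I) := by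
    rw [zetaC, ← Complex.exp_nat_mul]
    have : (((m + 2) * k.val : ℕ) : ℂ) * (2 * Real.pi * Complex.I / (m + 3)) =
        ((k.val : ℤ) : ℂ) * (2 * Real.pi * Complex.I) + ((-θ : ℝ) : ℂ) * Complex.I := by
      rw [hθ]
      push_cast
      field_simp
      ring
    rw [this, Complex.exp_add, Complex.exp_int_mul_two_pi_mul_I, one_mul]
  rw [eigC, h1, h2, Complex.exp_mul_I, Complex.exp_mul_I]
  push_cast [Complex.ofReal_cos, Complex.ofReal_sin]
  rw [Complex.cos_neg, Complex.sin_neg]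
  ring

lemma qSpec_cycle (m : ℕ) :
    qSpec (SimpleGraph.cycleGraph (m + 3)) =
      Finset.univ.val.map
        (fun k : Fin (m + 3) => 2 + 2 * Real.cos (2 * Real.pi * k.val / (m + 3))) := by
  classical
  set f : Fin (m + 3) → ℝ := fun k => 2 + 2 * Real.cos (2 * Real.pi * k.val / (m + 3)) with hf
  have hcp : (sLap (SimpleGraph.cycleGraph (m + 3))).charpoly =
      ∏ k : Fin (m + 3), (Polynomial.X - Polynomial.C (f k)) := by
    have hmap := Matrix.charpoly_map (sLap (SimpleGraph.cycleGraph (m + 3)))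
      (algebraMap ℝ ℂ)
    rw [charpolyC_eq] at hmap
    have hinj : Function.Injective (Polynomial.map (algebraMap ℝ ℂ)) :=
      Polynomial.map_injective _ Complex.ofReal_injective
    apply hinj
    rw [← hmap, Polynomial.map_prod]
    refine Finset.prod_congr rfl fun k _ => ?_
    rw [Polynomial.map_sub, Polynomial.map_X, Polynomial.map_C, eigC_eq_real]
    simp [hf]
  rw [qSpec, hcp, Finset.prod_eq_multiset_prod,
    show Finset.univ.val.map (fun k => Polynomial.X - Polynomial.C (f k)) =
      (Finset.univ.val.map f).map (fun a => Polynomial.X - Polynomial.C a) by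
        rw [Multiset.map_map]; rfl,
    Polynomial.roots_multiset_prod_X_sub_C]

open Real in

lemma cos_lt_neg_half_iff (n k : ℕ) (hn : 3 ≤ n) (hk : k < n) :
    Real.cos (2 * Real.pi * k / n) < -(1 / 2) ↔ n < 3 * k ∧ 3 * k < 2 * n := by
  have hπ := Real.pi_pos
  have hnR : (0 : ℝ) < n := by
    have : (0 : ℝ) < (n : ℝ) ↔ 0 < n := by exact_mod_cast Iff.rfl
    exact this.mpr (by omega)
  set θ : ℝ := 2 * Real.pi * k / n with hθ
  have hθ0 : 0 ≤ θ := by positivity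
  have hθub : θ < 2 * π := by
    rw [hθ, div_lt_iff₀ hnR]
    have hkR : (k : ℝ) < n := by exact_mod_cast hk
    nlinarith
  have hc23 : Real.cos (2 * π / 3) = -(1 / 2) := by
    rw [show (2 * π / 3 : ℝ) = π - π / 3 by ring, Real.cos_pi_sub, Real.cos_pi_div_three]
  have hiff1 : 2 * π / 3 < θ ↔ n < 3 * k := by
    rw [hθ, div_lt_div_iff₀ (by norm_num) hnR]
    constructor
    · intro h
      have : (n : ℝ) < 3 * k := by nlinarith
      exact_mod_cast this
    · intro h
      have : (n : ℝ) < 3 * k := by exact_mod_cast h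
      nlinarith
  have hiff2 : θ < 4 * π / 3 ↔ 3 * k < 2 * n := by
    rw [hθ, div_lt_div_iff₀ hnR (by norm_num)]
    constructor
    · intro h
      have : (3 : ℝ) * k < 2 * n := by nlinarith
      exact_mod_cast this
    · intro h
      have : (3 : ℝ) * k < 2 * n := by exact_mod_cast h
      nlinarith
  constructor
  · intro h
    constructor
    · by_contra hle
      have hθle : θ ≤ 2 * π / 3 := not_lt.mp (fun hh => hle (hiff1.mp hh))
      have := Real.cos_le_cos_of_nonneg_of_le_pi hθ0 (by linarith) hθle
      linarith
    · by_contra hle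
      have h43 : 4 * π / 3 ≤ θ := not_lt.mp (fun hh => hle (hiff2.mp hh))
      have hsym : Real.cos (2 * π - θ) = Real.cos θ := Real.cos_two_pi_sub θ
      have := Real.cos_le_cos_of_nonneg_of_le_pi (by linarith : (0:ℝ) ≤ 2 * π - θ)
        (by linarith) (by linarith : 2 * π - θ ≤ 2 * π / 3)
      linarith
  · rintro ⟨h1, h2⟩
    have ha : 2 * π / 3 < θ := hiff1.mpr h1
    have hb : θ < 4 * π / 3 := hiff2.mpr h2
    rcases le_or_gt θ π with hp | hp
    · have := Real.cos_lt_cos_of_nonneg_of_le_pi (by positivity : (0:ℝ) ≤ 2 * π / 3) hp ha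
      linarith
    · have hsym : Real.cos (2 * π - θ) = Real.cos θ := Real.cos_two_pi_sub θ
      have := Real.cos_lt_cos_of_nonneg_of_le_pi (by positivity : (0:ℝ) ≤ 2 * π / 3)
        (by linarith : 2 * π - θ ≤ π) (by linarith : 2 * π / 3 < 2 * π - θ)
      linarith

lemma qCount_cycle_le (m : ℕ) :
    qCount (SimpleGraph.cycleGraph (m + 3)) (Set.Ico 0 1) ≤
      (2 * (m + 3) - 1) / 3 - (m + 3) / 3 := by
  classical
  have hpred : ∀ k : Fin (m + 3),
      ((2 : ℝ) + 2 * Real.cos (2 * Real.pi * k.val / (m + 3)) ∈ Set.Ico (0 : ℝ) 1) ↔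
        (m + 3 < 3 * k.val ∧ 3 * k.val < 2 * (m + 3)) := by
    intro k
    rw [Set.mem_Ico]
    have hcos := cos_lt_neg_half_iff (m + 3) k.val (by omega) k.isLt
    have hge := Real.neg_one_le_cos (2 * Real.pi * k.val / (m + 3))
    push_cast at hcos
    constructor
    · rintro ⟨h0, h1⟩
      exact hcos.mp (by linarith)
    · intro h
      have := hcos.mpr h
      constructor <;> linarith
  rw [qCount, qSpec_cycle, Multiset.countP_map]
  have main : (Finset.univ.filter (fun a : Fin (m + 3) =>
      m + 3 < 3 * a.val ∧ 3 * a.val < 2 * (m + 3))).card ≤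
      (2 * (m + 3) - 1) / 3 - (m + 3) / 3 := by
    calc (Finset.univ.filter (fun a : Fin (m + 3) =>
          m + 3 < 3 * a.val ∧ 3 * a.val < 2 * (m + 3))).card
        ≤ (Finset.Icc ((m + 3) / 3 + 1) ((2 * (m + 3) - 1) / 3)).card := by
          apply Finset.card_le_card_of_injOn (fun k => k.val)
          · intro k hk
            have h := (Finset.mem_filter.mp hk).2
            simp only [Finset.mem_coe, Finset.mem_Icc]
            omega
          · exact fun a _ b _ h => Fin.ext h
      _ = (2 * (m + 3) - 1) / 3 - (m + 3) / 3 := by rw [Nat.card_Icc]; omega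
  refine le_trans (le_of_eq ?_) main
  rw [Finset.card_def, Finset.filter_val]
  congr 1
  exact @Multiset.filter_congr _ _ _
    (fun a : Fin (m + 3) => Classical.decPred (fun x : ℝ => x ∈ Set.Ico (0 : ℝ) 1)
      (2 + 2 * Real.cos (2 * Real.pi * a.val / (m + 3)))) _ _ (fun x _ => hpred x)

lemma matchingNumber_cycle_ge (n : ℕ) (hn : 3 ≤ n) :
    n / 2 ≤ matchingNumber (SimpleGraph.cycleGraph n) := by
  have hnpos : 0 < n := by omega
  set G := SimpleGraph.cycleGraph n with hG
  have hmod : (n + 1) % n = 1 := by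
    rw [Nat.add_mod_left]; exact Nat.mod_eq_of_lt (by omega)
  have hadj : ∀ u v : Fin n, u.val / 2 = v.val / 2 → u ≠ v →
      u.val < 2 * (n / 2) → v.val < 2 * (n / 2) → G.Adj u v := by
    intro u v h12 hne hu hv
    have hne' : u.val ≠ v.val := fun h => hne (Fin.ext h)
    rw [hG, SimpleGraph.cycleGraph_adj']
    rcases Nat.lt_or_ge u.val v.val with h | h
    · right
      rw [Fin.sub_def]
      have h1 : v.val = u.val + 1 := by omega
      have : n - u.val + v.val = n + 1 := by omega
      simp only [this, hmod]
    · left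
      rw [Fin.sub_def]
      have h1 : u.val = v.val + 1 := by omega
      have : n - v.val + u.val = n + 1 := by omega
      simp only [this, hmod]
  let M : G.Subgraph :=
    { verts := {v : Fin n | v.val < 2 * (n / 2)}
      Adj := fun u v => u.val / 2 = v.val / 2 ∧ u ≠ v ∧
        u.val < 2 * (n / 2) ∧ v.val < 2 * (n / 2)
      adj_sub := fun {u v} h => hadj u v h.1 h.2.1 h.2.2.1 h.2.2.2
      edge_vert := fun {u v} h => h.2.2.1
      symm := ⟨fun u v h => ⟨h.1.symm, h.2.1.symm, h.2.2.2, h.2.2.1⟩⟩ }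
  have hM : M.IsMatching := by
    intro v hv
    have hv' : v.val < 2 * (n / 2) := hv
    refine ⟨⟨if v.val % 2 = 0 then v.val + 1 else v.val - 1, by split <;> omega⟩,
      ⟨by simp only []; split <;> omega, ?_, hv', by simp only []; split <;> omega⟩, ?_⟩
    · refine fun h => ?_
      have := congrArg Fin.val h
      simp only [] at this
      split at this <;> omega
    · rintro y ⟨h1, h2, _, h4⟩
      have hy : y.val ≠ v.val := fun h => h2 (Fin.ext h.symm)
      apply Fin.ext
      simp only []
      split <;> omega
  have hcard : M.edgeSet.ncard = n / 2 := by
    have h2in : ∀ i : ℕ, i < n / 2 → 2 * i < n ∧ 2 * i + 1 < n := by intro i hi; omega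
    set g : ℕ → Sym2 (Fin n) := fun i =>
      Sym2.mk ⟨2 * i % n, Nat.mod_lt _ hnpos⟩ ⟨(2 * i + 1) % n, Nat.mod_lt _ hnpos⟩ with hg
    have hm1 : ∀ i : ℕ, i < n / 2 → 2 * i % n = 2 * i :=
      fun i hi => Nat.mod_eq_of_lt (h2in i hi).1
    have hm2 : ∀ i : ℕ, i < n / 2 → (2 * i + 1) % n = 2 * i + 1 :=
      fun i hi => Nat.mod_eq_of_lt (h2in i hi).2
    have hset : M.edgeSet = g '' (Set.Iio (n / 2)) := by
      ext e
      induction e with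
      | _ u v =>
        simp only [SimpleGraph.Subgraph.mem_edgeSet, Set.mem_image, Set.mem_Iio]
        constructor
        · rintro ⟨h1, h2, h3, h4⟩
          have hne' : u.val ≠ v.val := fun h => h2 (Fin.ext h)
          refine ⟨u.val / 2, by omega, ?_⟩
          have hi : u.val / 2 < n / 2 := by omega
          have b1 := hm1 _ hi
          have b2 := hm2 _ hi
          simp only [hg]
          rw [Sym2.eq_iff]
          rcases Nat.even_or_odd u.val with ⟨c, hc⟩ | ⟨c, hc⟩
          · exact Or.inl ⟨Fin.ext (show 2 * (u.val / 2) % n = u.val by rw [b1]; omega),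
              Fin.ext (show (2 * (u.val / 2) + 1) % n = v.val by rw [b2]; omega)⟩
          · exact Or.inr ⟨Fin.ext (show 2 * (u.val / 2) % n = v.val by rw [b1]; omega),
              Fin.ext (show (2 * (u.val / 2) + 1) % n = u.val by rw [b2]; omega)⟩
        · rintro ⟨i, hi, he⟩
          have b1 := hm1 _ hi
          have b2 := hm2 _ hi
          simp only [hg, Sym2.eq_iff] at he
          rcases he with ⟨h1, h2⟩ | ⟨h1, h2⟩ <;>
          · have e1 : 2 * i % n = _ := congrArg Fin.val h1
            have e2 : (2 * i + 1) % n = _ := congrArg Fin.val h2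
            rw [b1] at e1
            rw [b2] at e2
            exact ⟨by omega, fun hh => by have := congrArg Fin.val hh; omega, by omega, by omega⟩
    rw [hset, Set.ncard_image_of_injOn, ← Finset.coe_range, Set.ncard_coe_finset,
      Finset.card_range]
    intro i hi j hj hij
    simp only [hg, Sym2.eq_iff] at hij
    rcases hij with ⟨h1, -⟩ | ⟨h1, h2⟩
    · have := congrArg Fin.val h1
      simp only [hm1 _ hi, hm1 _ hj] at this
      omega
    · have e1 := congrArg Fin.val h1
      have e2 := congrArg Fin.val h2
      simp only [hm1 _ hi, hm2 _ hj, hm2 _ hi, hm1 _ hj] at e1 e2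
      omega
  have hmem : n / 2 ∈ {k | ∃ M : G.Subgraph, M.IsMatching ∧ M.edgeSet.ncard = k} :=
    ⟨M, hM, hcard⟩
  have hbdd : BddAbove {k | ∃ M : G.Subgraph, M.IsMatching ∧ M.edgeSet.ncard = k} := by
    refine ⟨Nat.card (Sym2 (Fin n)), ?_⟩
    rintro k ⟨M', _, rfl⟩
    calc M'.edgeSet.ncard ≤ (Set.univ : Set (Sym2 (Fin n))).ncard :=
          Set.ncard_le_ncard (Set.subset_univ _) Set.finite_univ
      _ = Nat.card (Sym2 (Fin n)) := Set.ncard_univ _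
  exact le_csSup hbdd hmem

/-- For every integer `n ≥ 3` with `n ≠ 5`, the number of signless Laplacian
eigenvalues of the cycle `C_n` in `[0, 1)` is at most its matching number minus one. -/
theorem cycle_count_le_matchingNumber (n : ℕ) (hn : 3 ≤ n) (h5 : n ≠ 5) :
    qCount (SimpleGraph.cycleGraph n) (Set.Ico 0 1) ≤
      matchingNumber (SimpleGraph.cycleGraph n) - 1 := by
  obtain ⟨m, rfl⟩ : ∃ m, n = m + 3 := ⟨n - 3, by omega⟩
  have h1 := qCount_cycle_le m
  have h2 := matchingNumber_cycle_ge (m + 3) (by omega)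
  omega
end

section
/- If G is a finite simple graph without isolated vertices, then the number of signless Laplacian eigenvalues of G in the interval [0,1) is at most the matching number ν(G) of G. -/
open Matrix

section Aux
open Matrix Polynomial
variable {V : Type*} [Fintype V] [DecidableEq V]




lemma charpoly_conj_unitary (U : Matrix.unitaryGroup V ℝ) (D : Matrix V V ℝ) :
    ((U : Matrix V V ℝ) * D * (star U : Matrix V V ℝ)).charpoly = D.charpoly := by
  have h1 : (U : Matrix V V ℝ).map C * (star U : Matrix V V ℝ).map C = 1 := by
    rw [← Matrix.map_mul]; simp [Matrix.map_one]
  have h2 : (star U : Matrix V V ℝ).map C * (U : Matrix V V ℝ).map C = 1 := by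
    rw [← Matrix.map_mul]; simp [Matrix.map_one]
  have hc : charmatrix ((U : Matrix V V ℝ) * D * (star U : Matrix V V ℝ)) =
      (U : Matrix V V ℝ).map C * charmatrix D * (star U : Matrix V V ℝ).map C := by
    rw [charmatrix, charmatrix, Matrix.mul_sub, Matrix.sub_mul]
    congr 1
    · rw [← (Matrix.scalar_commute (X : ℝ[X]) (fun r => Commute.all _ _) _).eq, mul_assoc, h1,
        mul_one]
    · simp [Matrix.map_mul]
  rw [Matrix.charpoly, Matrix.charpoly, hc, det_mul, det_mul, mul_comm, ← mul_assoc, ← det_mul, h2,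
    det_one, one_mul]

lemma charpoly_roots_eigenvalues (A : Matrix V V ℝ) (hA : A.IsHermitian) :
    A.charpoly.roots = Finset.univ.val.map hA.eigenvalues := by
  conv_lhs => rw [hA.spectral_theorem, Unitary.conjStarAlgAut_apply]
  rw [show (hA.eigenvectorUnitary : Matrix V V ℝ) * diagonal (RCLike.ofReal ∘ hA.eigenvalues) *
      (star hA.eigenvectorUnitary : Matrix V V ℝ) = (hA.eigenvectorUnitary : Matrix V V ℝ) *
      diagonal (RCLike.ofReal ∘ hA.eigenvalues) * (star (hA.eigenvectorUnitary : Matrix V V ℝ))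
      from rfl]
  rw [charpoly_conj_unitary hA.eigenvectorUnitary]
  have hd : (diagonal (RCLike.ofReal ∘ hA.eigenvalues) : Matrix V V ℝ).charpoly =
      ((Finset.univ.val.map hA.eigenvalues).map (fun a => X - C a)).prod := by
    rw [Matrix.charpoly, charmatrix]
    have : (scalar V) (X : ℝ[X]) - (RingHom.mapMatrix (C : ℝ →+* ℝ[X]))
        (diagonal (RCLike.ofReal ∘ hA.eigenvalues)) =
        diagonal (fun i => X - C (hA.eigenvalues i)) := by
      ext i j
      rcases eq_or_ne i j with h | h
      · subst h
        simp [Matrix.scalar_apply, Matrix.sub_apply, Matrix.diagonal_apply_eq,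
          RingHom.mapMatrix_apply, Matrix.map_apply]
      · simp [Matrix.scalar_apply, Matrix.sub_apply, Matrix.diagonal_apply_ne _ h,
          RingHom.mapMatrix_apply, Matrix.map_apply]
    rw [this, det_diagonal, Multiset.map_map]
    rw [Finset.prod]
    congr 1
  rw [hd, Polynomial.roots_multiset_prod_X_sub_C]




lemma sum_dotProduct' {ι : Type*} (s : Finset ι) (f : ι → V → ℝ) (w : V → ℝ) :
    (∑ i ∈ s, f i) ⬝ᵥ w = ∑ i ∈ s, f i ⬝ᵥ w := by
  simp only [dotProduct, Finset.sum_apply, Finset.sum_mul]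
  exact Finset.sum_comm

lemma dotProduct_sum' {ι : Type*} (s : Finset ι) (f : ι → V → ℝ) (w : V → ℝ) :
    w ⬝ᵥ (∑ i ∈ s, f i) = ∑ i ∈ s, w ⬝ᵥ f i := by
  simp only [dotProduct, Finset.sum_apply, Finset.mul_sum]
  exact Finset.sum_comm

lemma countP_lt_one_le (A : Matrix V V ℝ) (hA : A.IsHermitian) (k : ℕ)
    (W : Submodule ℝ (V → ℝ)) (hW : Fintype.card V ≤ k + Module.finrank ℝ W)
    (hpos : ∀ x ∈ W, (∑ v, x v ^ 2) ≤ x ⬝ᵥ A *ᵥ x)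
    (hroots : A.charpoly.roots = Finset.univ.val.map hA.eigenvalues) :
    Multiset.countP (fun r : ℝ => r < 1) A.charpoly.roots ≤ k := by
  classical
  rw [hroots, Multiset.countP_map]
  set v : V → V → ℝ := fun i => ⇑(hA.eigenvectorBasis i) with hv
  have horth : ∀ i j, v i ⬝ᵥ v j = if i = j then 1 else 0 := by
    intro i j
    have := orthonormal_iff_ite.mp hA.eigenvectorBasis.orthonormal i j
    rw [PiLp.inner_apply] at this
    simpa [dotProduct, mul_comm, RCLike.inner_apply, starRingEnd_apply] using this
  set S : Finset V := Finset.univ.filter (fun i => hA.eigenvalues i < 1) with hS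
  rw [show Multiset.card (Multiset.filter (fun a => hA.eigenvalues a < 1) Finset.univ.val)
      = S.card from rfl]
  -- dot products with linear combinations
  have hcombo : ∀ (c : S → ℝ) (j : V), (∑ i : S, c i • v i) ⬝ᵥ v j
      = ∑ i : S, c i * (if (i : V) = j then 1 else 0) := by
    intro c j
    rw [sum_dotProduct']
    refine Finset.sum_congr rfl fun i _ => ?_
    rw [smul_dotProduct, horth, smul_eq_mul]
  -- linear independence
  have hli : LinearIndependent ℝ (fun i : S => v i) := by
    rw [Fintype.linearIndependent_iff]
    intro c hc j
    have h2 := congrArg (fun y => y ⬝ᵥ v (j : V)) hc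
    simp only [zero_dotProduct] at h2
    rw [hcombo] at h2
    rw [Finset.sum_eq_single j (fun i _ hij => by
        simp [Subtype.coe_injective.ne hij]) (by simp)] at h2
    simpa using h2
  set U : Submodule ℝ (V → ℝ) := Submodule.span ℝ (Set.range fun i : S => v i) with hU
  have hUrank : Module.finrank ℝ U = S.card := by
    rw [hU, finrank_span_eq_card hli, Fintype.card_coe]
  -- disjointness
  have hdisj : Disjoint U W := by
    rw [Submodule.disjoint_def]
    intro x hxU hxW
    by_contra hx0
    rw [hU] at hxU
    obtain ⟨c, hc⟩ := (Submodule.mem_span_range_iff_exists_fun ℝ).mp hxU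
    have hxdot : ∀ j : S, x ⬝ᵥ v j = c j := by
      intro j
      rw [← hc, hcombo]
      rw [Finset.sum_eq_single j (fun i _ hij => by
        simp [Subtype.coe_injective.ne hij]) (by simp)]
      simp
    have hev : ∀ i : V, A *ᵥ v i = hA.eigenvalues i • v i := fun i =>
      hA.mulVec_eigenvectorBasis i
    have hAx : A *ᵥ x = ∑ i : S, (hA.eigenvalues i * c i) • v i := by
      rw [← hc]
      rw [show A *ᵥ (∑ i : S, c i • v i) = ∑ i : S, c i • (A *ᵥ v (i : V)) by
        simp only [← Matrix.mulVecLin_apply, map_sum, LinearMap.map_smul]]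
      refine Finset.sum_congr rfl fun i _ => ?_
      rw [hev, smul_smul, mul_comm (c i) _]
    have h1 : x ⬝ᵥ A *ᵥ x = ∑ i : S, hA.eigenvalues i * c i * c i := by
      rw [hAx, dotProduct_sum']
      refine Finset.sum_congr rfl fun i _ => ?_
      rw [dotProduct_smul, hxdot i, smul_eq_mul]
    have h2 : ∑ w, x w ^ 2 = ∑ i : S, c i * c i := by
      have hdd : ∑ w, x w ^ 2 = x ⬝ᵥ x := by simp [dotProduct, pow_two]
      rw [hdd]
      nth_rewrite 2 [← hc]
      rw [dotProduct_sum']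
      refine Finset.sum_congr rfl fun i _ => ?_
      rw [dotProduct_smul, hxdot i, smul_eq_mul]
    have hcn : ∃ j : S, c j ≠ 0 := by
      by_contra hall
      push_neg at hall
      exact hx0 (by rw [← hc]; exact Finset.sum_eq_zero fun i _ => by rw [hall i, zero_smul])
    have heig : ∀ i : S, hA.eigenvalues (i : V) < 1 := by
      intro i
      have h2 := i.2
      simp only [hS, Finset.mem_filter] at h2
      exact h2.2
    have hlt : ∑ i : S, hA.eigenvalues i * c i * c i < ∑ i : S, c i * c i := by
      obtain ⟨j, hj⟩ := hcn
      refine Finset.sum_lt_sum (fun i _ => ?_) ⟨j, Finset.mem_univ j, ?_⟩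
      · nlinarith [mul_self_nonneg (c i), heig i]
      · nlinarith [(mul_self_pos).mpr hj, heig j]
    have hge := hpos x hxW
    rw [h1, h2] at hge
    exact absurd hge (not_le.mpr hlt)
  have hsum := Submodule.finrank_sup_add_finrank_inf_eq U W
  rw [hdisj.eq_bot, finrank_bot, add_zero] at hsum
  have hle : Module.finrank ℝ ↥(U ⊔ W) ≤ Fintype.card V := by
    have := Submodule.finrank_le (U ⊔ W)
    rwa [Module.finrank_pi ℝ] at this
  omega


lemma sLap_eq (G : SimpleGraph V) [DecidableRel G.Adj] :
    sLap G = Matrix.diagonal (fun v => (G.degree v : ℝ)) + G.adjMatrix ℝ := by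
  unfold sLap
  congr 1
  · congr!
  · ext i j
    by_cases h : G.Adj i j <;> simp [h]

lemma sLap_apply (G : SimpleGraph V) [DecidableRel G.Adj] (i j : V) :
    sLap G i j = (if i = j then (G.degree i : ℝ) else 0) + (if G.Adj i j then 1 else 0) := by
  rw [sLap_eq, Matrix.add_apply, SimpleGraph.adjMatrix_apply, Matrix.diagonal_apply]

lemma sLap_isHermitian (G : SimpleGraph V) : (sLap G).IsHermitian := by
  classical
  rw [Matrix.IsHermitian]
  ext i j
  rw [Matrix.conjTranspose_apply, sLap_apply, sLap_apply, star_trivial]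
  rcases eq_or_ne i j with rfl | hne
  · simp
  · have h1 : ¬ j = i := fun hh => hne hh.symm
    simp [hne, h1, SimpleGraph.adj_comm]

lemma quad_eq (G : SimpleGraph V) [DecidableRel G.Adj] (x : V → ℝ) :
    2 * (x ⬝ᵥ sLap G *ᵥ x) =
      ∑ v, ∑ w, (if G.Adj v w then (x v + x w) ^ 2 else 0) := by
  classical
  have hdeg : ∀ a : V, (G.degree a : ℝ) = ∑ b, (if G.Adj a b then (1 : ℝ) else 0) := by
    intro a
    rw [Finset.sum_boole, SimpleGraph.degree, SimpleGraph.neighborFinset_eq_filter]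
  rw [sLap_eq, add_mulVec, dotProduct_add]
  have h1 : x ⬝ᵥ (Matrix.diagonal (fun v => (G.degree v : ℝ)) *ᵥ x)
      = ∑ v, ∑ w, (if G.Adj v w then x v * x v else 0) := by
    rw [dotProduct]
    refine Finset.sum_congr rfl fun v _ => ?_
    rw [mulVec_diagonal, hdeg v, Finset.sum_mul, Finset.mul_sum]
    refine Finset.sum_congr rfl fun w _ => ?_
    by_cases h : G.Adj v w <;> simp [h]
  have h2 : x ⬝ᵥ (G.adjMatrix ℝ *ᵥ x)
      = ∑ v, ∑ w, (if G.Adj v w then x v * x w else 0) := by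
    rw [dotProduct]
    refine Finset.sum_congr rfl fun v _ => ?_
    rw [mulVec, dotProduct, Finset.mul_sum]
    refine Finset.sum_congr rfl fun w _ => ?_
    rw [SimpleGraph.adjMatrix_apply]
    by_cases h : G.Adj v w <;> simp [h]
  have hswap : ∑ v, ∑ w, (if G.Adj v w then (x w * x w + x v * x w) else 0)
      = ∑ v, ∑ w, (if G.Adj v w then (x v * x v + x v * x w) else 0) := by
    rw [Finset.sum_comm]
    refine Finset.sum_congr rfl fun v _ => Finset.sum_congr rfl fun w _ => ?_
    by_cases h : G.Adj v w
    · simp only [h, h.symm, if_true]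
      ring
    · have h' : ¬ G.Adj w v := fun hh => h hh.symm
      simp [h, h']
  have hcomb : (∑ v, ∑ w, (if G.Adj v w then x v * x v else 0))
      + (∑ v, ∑ w, (if G.Adj v w then x v * x w else 0))
      = ∑ v, ∑ w, (if G.Adj v w then (x v * x v + x v * x w) else 0) := by
    rw [← Finset.sum_add_distrib]
    refine Finset.sum_congr rfl fun v _ => ?_
    rw [← Finset.sum_add_distrib]
    refine Finset.sum_congr rfl fun w _ => ?_
    by_cases h : G.Adj v w <;> simp [h]
  have hsplit : ∑ v, ∑ w, (if G.Adj v w then (x v + x w) ^ 2 else 0)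
      = (∑ v, ∑ w, (if G.Adj v w then (x v * x v + x v * x w) else 0))
      + (∑ v, ∑ w, (if G.Adj v w then (x w * x w + x v * x w) else 0)) := by
    rw [← Finset.sum_add_distrib]
    refine Finset.sum_congr rfl fun v _ => ?_
    rw [← Finset.sum_add_distrib]
    refine Finset.sum_congr rfl fun w _ => ?_
    by_cases h : G.Adj v w
    · simp only [h, if_true]
      ring
    · simp [h]
  rw [h1, h2, hcomb, hsplit, hswap]
  ring

lemma quad_ge (G : SimpleGraph V) [DecidableRel G.Adj] (C : Finset V)
    (hdom : ∀ v, v ∉ C → ∃ c ∈ C, G.Adj v c) (x : V → ℝ) (hx : ∀ c ∈ C, x c = 0) :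
    (∑ v, x v ^ 2) ≤ x ⬝ᵥ sLap G *ᵥ x := by
  classical
  set g : V → ℝ := fun v => ∑ w, if G.Adj v w then (x v + x w) ^ 2 else 0 with hg
  have hgnn : ∀ v, 0 ≤ g v := fun v =>
    Finset.sum_nonneg fun w _ => by positivity
  have hf : ∀ v, v ∉ C → ∃ c, c ∈ C ∧ G.Adj v c := by
    intro v hv
    obtain ⟨c, hc1, hc2⟩ := hdom v hv
    exact ⟨c, hc1, hc2⟩
  set f : V → V := fun v => if hv : v ∉ C then (hf v hv).choose else v with hfdef
  have hf1 : ∀ v, v ∉ C → f v ∈ C ∧ G.Adj v (f v) := by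
    intro v hv
    have := (hf v hv).choose_spec
    simp only [hfdef, dif_pos hv]
    exact this
  have claim1 : ∀ v ∈ Finset.univ \ C, x v ^ 2 ≤ g v := by
    intro v hv
    rw [Finset.mem_sdiff] at hv
    obtain ⟨hfC, hfadj⟩ := hf1 v hv.2
    have hterm : x v ^ 2 = if G.Adj v (f v) then (x v + x (f v)) ^ 2 else 0 := by
      rw [if_pos hfadj, hx (f v) hfC, add_zero]
    rw [hterm]
    exact Finset.single_le_sum (f := fun w => if G.Adj v w then (x v + x w) ^ 2 else 0)
      (fun w _ => by positivity) (Finset.mem_univ (f v))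
  have claim2 : ∀ v ∈ C, (∑ w ∈ (Finset.univ \ C).filter (fun w => f w = v), x w ^ 2) ≤ g v := by
    intro v hvC
    have heq : ∑ w ∈ (Finset.univ \ C).filter (fun w => f w = v), x w ^ 2
        = ∑ w ∈ (Finset.univ \ C).filter (fun w => f w = v),
            (if G.Adj v w then (x v + x w) ^ 2 else 0) := by
      refine Finset.sum_congr rfl fun w hw => ?_
      rw [Finset.mem_filter, Finset.mem_sdiff] at hw
      obtain ⟨⟨_, hwC⟩, hfw⟩ := hw
      have hadj : G.Adj v w := by
        have := (hf1 w hwC).2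
        rw [hfw] at this
        exact this.symm
      rw [if_pos hadj, hx v hvC, zero_add]
    rw [heq]
    exact Finset.sum_le_sum_of_subset_of_nonneg (Finset.subset_univ _)
      (fun w _ _ => by positivity)
  have hfib : ∑ v ∈ C, (∑ w ∈ (Finset.univ \ C).filter (fun w => f w = v), x w ^ 2)
      = ∑ w ∈ Finset.univ \ C, x w ^ 2 := by
    refine Finset.sum_fiberwise_of_maps_to ?_ _
    intro w hw
    rw [Finset.mem_sdiff] at hw
    exact (hf1 w hw.2).1
  have hzero : ∑ v ∈ C, x v ^ 2 = 0 :=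
    Finset.sum_eq_zero fun v hv => by rw [hx v hv]; ring
  have hxsum : ∑ v, x v ^ 2 = ∑ v ∈ Finset.univ \ C, x v ^ 2 := by
    rw [← Finset.sum_sdiff (Finset.subset_univ C), hzero, add_zero]
  have hA : 2 * (x ⬝ᵥ sLap G *ᵥ x) = ∑ v, g v := quad_eq G x
  have hsplitg : ∑ v, g v = (∑ v ∈ Finset.univ \ C, g v) + ∑ v ∈ C, g v :=
    (Finset.sum_sdiff (Finset.subset_univ C)).symm
  have hb1 : ∑ v ∈ Finset.univ \ C, x v ^ 2 ≤ ∑ v ∈ Finset.univ \ C, g v :=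
    Finset.sum_le_sum claim1
  have hb2 : ∑ v ∈ Finset.univ \ C, x v ^ 2 ≤ ∑ v ∈ C, g v := by
    rw [← hfib]
    exact Finset.sum_le_sum claim2
  have : 2 * ∑ v, x v ^ 2 ≤ 2 * (x ⬝ᵥ sLap G *ᵥ x) := by
    rw [hA, hsplitg, hxsum]
    linarith
  linarith


namespace AuxMatch

lemma bot_isMatching (G : SimpleGraph V) : (⊥ : G.Subgraph).IsMatching := by
  intro v hv
  simp at hv

lemma bddAbove_matchSet (G : SimpleGraph V) :
    BddAbove {k | ∃ M : G.Subgraph, M.IsMatching ∧ M.edgeSet.ncard = k} := by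
  refine ⟨G.edgeSet.ncard, ?_⟩
  rintro k ⟨M, hM, rfl⟩
  exact Set.ncard_le_ncard M.edgeSet_subset (Set.toFinite _)

lemma matchSet_nonempty (G : SimpleGraph V) :
    Set.Nonempty {k | ∃ M : G.Subgraph, M.IsMatching ∧ M.edgeSet.ncard = k} :=
  ⟨0, ⊥, bot_isMatching G, by simp [SimpleGraph.Subgraph.edgeSet_bot]⟩

lemma exists_max_matching (G : SimpleGraph V) :
    ∃ M : G.Subgraph, M.IsMatching ∧ M.edgeSet.ncard = matchingNumber G :=
  Nat.sSup_mem (matchSet_nonempty G) (bddAbove_matchSet G)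

lemma matching_card_le (G : SimpleGraph V) (M : G.Subgraph) (hM : M.IsMatching) :
    M.edgeSet.ncard ≤ matchingNumber G :=
  le_csSup (bddAbove_matchSet G) ⟨M, hM, rfl⟩

/-- surgery 1 : an unmatched edge can be added to a maximum matching -/
lemma mem_verts_of_adj (G : SimpleGraph V) (M : G.Subgraph) (hM : M.IsMatching)
    (hcard : M.edgeSet.ncard = matchingNumber G) {u w : V}
    (hu : u ∉ M.verts) (huw : G.Adj u w) : w ∈ M.verts := by
  by_contra hw
  set M' := M ⊔ G.subgraphOfAdj huw with hM'
  have hmatch : M'.IsMatching := by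
    refine hM.sup (SimpleGraph.Subgraph.IsMatching.subgraphOfAdj huw) ?_
    rw [hM.support_eq_verts, (SimpleGraph.Subgraph.IsMatching.subgraphOfAdj
      huw).support_eq_verts]
    rw [SimpleGraph.subgraphOfAdj_verts]
    rw [Set.disjoint_iff]
    rintro z ⟨hz1, hz2⟩
    rcases hz2 with rfl | rfl
    · exact hu hz1
    · exact hw hz1
  have hedge : M'.edgeSet = insert s(u, w) M.edgeSet := by
    rw [hM', SimpleGraph.Subgraph.edgeSet_sup, SimpleGraph.edgeSet_subgraphOfAdj]
    rw [Set.union_comm]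
    simp [Set.union_singleton]
  have hnotmem : s(u, w) ∉ M.edgeSet := by
    intro hmem
    exact hu (M.edge_vert (SimpleGraph.Subgraph.mem_edgeSet.mp hmem))
  have hcard' : M'.edgeSet.ncard = matchingNumber G + 1 := by
    rw [hedge, Set.ncard_insert_of_notMem hnotmem (Set.toFinite _), hcard]
  have := matching_card_le G M' hmatch
  omega

/-- surgery 2 : no augmenting path of length 3 -/
lemma no_augment (G : SimpleGraph V) (M : G.Subgraph) (hM : M.IsMatching)
    (hcard : M.edgeSet.ncard = matchingNumber G) {a b u w : V}
    (hab : M.Adj a b) (hu : u ∉ M.verts) (hw : w ∉ M.verts) (huw : u ≠ w)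
    (hua : G.Adj u a) (hwb : G.Adj w b) : False := by
  have hane : a ≠ b := (M.adj_sub hab).ne
  have haV : a ∈ M.verts := M.edge_vert hab
  have hbV : b ∈ M.verts := M.edge_vert hab.symm
  set s : Set V := M.verts \ {a, b} with hs
  -- the induced subgraph is a matching
  have hind : (M.induce s).IsMatching := by
    intro v hv
    rw [SimpleGraph.Subgraph.induce_verts] at hv
    obtain ⟨hvV, hvab⟩ := hv
    obtain ⟨p, hp, hpuniq⟩ := hM hvV
    have hpV : p ∈ M.verts := M.edge_vert hp.symm
    have hpa : p ≠ a := by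
      rintro rfl
      obtain ⟨q, hq, hquniq⟩ := hM haV
      have h1 := hquniq v hp.symm
      have h2 := hquniq b hab
      rw [h1.trans h2.symm] at hvab
      simp at hvab
    have hpb : p ≠ b := by
      rintro rfl
      obtain ⟨q, hq, hquniq⟩ := hM hbV
      have h1 := hquniq v hp.symm
      have h2 := hquniq a hab.symm
      rw [h1.trans h2.symm] at hvab
      simp at hvab
    refine ⟨p, ⟨⟨hvV, hvab⟩, ⟨hpV, ?_⟩, hp⟩, ?_⟩
    · simp [hpa, hpb]
    · rintro q ⟨_, _, hq⟩
      exact hpuniq q hq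
  set S1 := G.subgraphOfAdj hua with hS1
  set S2 := G.subgraphOfAdj hwb with hS2
  have hm1 : (M.induce s ⊔ S1).IsMatching := by
    refine hind.sup (SimpleGraph.Subgraph.IsMatching.subgraphOfAdj hua) ?_
    rw [hind.support_eq_verts, (SimpleGraph.Subgraph.IsMatching.subgraphOfAdj
      hua).support_eq_verts, SimpleGraph.Subgraph.induce_verts,
      SimpleGraph.subgraphOfAdj_verts, Set.disjoint_iff]
    rintro z ⟨⟨hz1, hz2⟩, hz3⟩
    rcases hz3 with rfl | rfl
    · exact hu hz1
    · simp at hz2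
  have hm2 : ((M.induce s ⊔ S1) ⊔ S2).IsMatching := by
    refine hm1.sup (SimpleGraph.Subgraph.IsMatching.subgraphOfAdj hwb) ?_
    rw [hm1.support_eq_verts, (SimpleGraph.Subgraph.IsMatching.subgraphOfAdj
      hwb).support_eq_verts, SimpleGraph.Subgraph.verts_sup,
      SimpleGraph.Subgraph.induce_verts, SimpleGraph.subgraphOfAdj_verts,
      SimpleGraph.subgraphOfAdj_verts, Set.disjoint_iff]
    rintro z ⟨hz1, hz2⟩
    rcases hz2 with rfl | rfl
    · rcases hz1 with ⟨hz1, hz2⟩ | hz1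
      · exact hw hz1
      · rcases hz1 with rfl | rfl
        · exact huw rfl
        · exact hw haV
    · rcases hz1 with ⟨hz1, hz2⟩ | hz1
      · simp at hz2
      · rcases hz1 with rfl | rfl
        · exact hu hbV
        · exact hane rfl
  -- edge sets
  have hedge_ind : (M.induce s).edgeSet = M.edgeSet \ {s(a, b)} := by
    ext e
    induction e using Sym2.ind with
    | _ x y =>
      rw [SimpleGraph.Subgraph.mem_edgeSet, Set.mem_diff,
        SimpleGraph.Subgraph.mem_edgeSet, SimpleGraph.Subgraph.induce_adj]
      constructor
      · rintro ⟨hxs, hys, hxy⟩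
        refine ⟨hxy, ?_⟩
        intro hmem
        rw [Set.mem_singleton_iff, Sym2.eq_iff] at hmem
        rw [hs, Set.mem_diff] at hxs
        rcases hmem with ⟨rfl, rfl⟩ | ⟨rfl, rfl⟩
        · exact hxs.2 (by simp)
        · exact hxs.2 (by simp)
      · rintro ⟨hxy, hne⟩
        have hxV : x ∈ M.verts := M.edge_vert hxy
        have hyV : y ∈ M.verts := M.edge_vert hxy.symm
        have hxa : x ≠ a := by
          rintro rfl
          obtain ⟨q, hq, hquniq⟩ := hM haV
          have h1 := hquniq y hxy
          have h2 := hquniq b hab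
          apply hne
          rw [h1.trans h2.symm]
          exact Set.mem_singleton _
        have hxb : x ≠ b := by
          rintro rfl
          obtain ⟨q, hq, hquniq⟩ := hM hbV
          have h1 := hquniq y hxy
          have h2 := hquniq a hab.symm
          apply hne
          rw [h1.trans h2.symm, Sym2.eq_swap]
          exact Set.mem_singleton _
        have hya : y ≠ a := by
          rintro rfl
          obtain ⟨q, hq, hquniq⟩ := hM haV
          have h1 := hquniq x hxy.symm
          have h2 := hquniq b hab
          apply hne
          rw [h1.trans h2.symm, Sym2.eq_swap]
          exact Set.mem_singleton _
        have hyb : y ≠ b := by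
          rintro rfl
          obtain ⟨q, hq, hquniq⟩ := hM hbV
          have h1 := hquniq x hxy.symm
          have h2 := hquniq a hab.symm
          apply hne
          rw [h1.trans h2.symm]
          exact Set.mem_singleton _
        exact ⟨⟨hxV, by simp [hxa, hxb]⟩, ⟨hyV, by simp [hya, hyb]⟩, hxy⟩
  have habe : s(a, b) ∈ M.edgeSet := SimpleGraph.Subgraph.mem_edgeSet.mpr hab
  have hcard_ind : (M.induce s).edgeSet.ncard = matchingNumber G - 1 := by
    rw [hedge_ind, Set.ncard_diff_singleton_of_mem habe, hcard]
  have hpos : 1 ≤ matchingNumber G := by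
    have : 0 < M.edgeSet.ncard := (Set.ncard_pos (Set.toFinite _)).mpr ⟨_, habe⟩
    omega
  -- final edge set counts
  have he1 : s(u, a) ∉ (M.induce s).edgeSet := by
    rw [hedge_ind]
    rintro ⟨he, -⟩
    exact hu (M.edge_vert (SimpleGraph.Subgraph.mem_edgeSet.mp he))
  have hq1 : ((M.induce s) ⊔ S1).edgeSet.ncard = matchingNumber G := by
    rw [SimpleGraph.Subgraph.edgeSet_sup, hS1, SimpleGraph.edgeSet_subgraphOfAdj,
      Set.union_singleton, Set.ncard_insert_of_notMem he1 (Set.toFinite _), hcard_ind]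
    omega
  have he2 : s(w, b) ∉ ((M.induce s) ⊔ S1).edgeSet := by
    rw [SimpleGraph.Subgraph.edgeSet_sup]
    rintro (he | he)
    · rw [hedge_ind] at he
      exact hw (M.edge_vert (SimpleGraph.Subgraph.mem_edgeSet.mp he.1))
    · rw [hS1, SimpleGraph.edgeSet_subgraphOfAdj] at he
      simp only [Set.mem_singleton_iff, Sym2.eq, Sym2.rel_iff', Prod.mk.injEq] at he
      rcases he with ⟨rfl, rfl⟩ | ⟨rfl, rfl⟩
      · exact huw rfl
      · exact hu (M.edge_vert hab.symm)
  have hq2 : (((M.induce s) ⊔ S1) ⊔ S2).edgeSet.ncard = matchingNumber G + 1 := by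
    rw [SimpleGraph.Subgraph.edgeSet_sup, hS2, SimpleGraph.edgeSet_subgraphOfAdj,
      Set.union_singleton, Set.ncard_insert_of_notMem he2 (Set.toFinite _), hq1]
  have := matching_card_le G _ hm2
  omega

end AuxMatch

namespace AuxMatch

lemma exists_cover (G : SimpleGraph V) (h : ∀ v : V, ∃ w, G.Adj v w) :
    ∃ C : Finset V, C.card ≤ matchingNumber G ∧ ∀ v, v ∉ C → ∃ c ∈ C, G.Adj v c := by
  classical
  obtain ⟨M, hM, hcard⟩ := exists_max_matching G
  have hchoice : ∀ e ∈ M.edgeSet, ∃ c, c ∈ e ∧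
      ∀ u, u ∉ M.verts → (∃ z, z ∈ e ∧ G.Adj u z) → G.Adj u c := by
    intro e he
    induction e using Sym2.ind with
    | _ a b =>
      have hab : M.Adj a b := SimpleGraph.Subgraph.mem_edgeSet.mp he
      by_cases hA : ∀ u, u ∉ M.verts → G.Adj u b → G.Adj u a
      · refine ⟨a, Sym2.mem_mk_left a b, ?_⟩
        rintro u hu ⟨z, hz, huz⟩
        rw [Sym2.mem_iff] at hz
        rcases hz with rfl | rfl
        · exact huz
        · exact hA u hu huz
      · push_neg at hA
        obtain ⟨u₀, hu₀, hu₀b, hu₀a⟩ := hA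
        refine ⟨b, Sym2.mem_mk_right a b, ?_⟩
        rintro u hu ⟨z, hz, huz⟩
        rw [Sym2.mem_iff] at hz
        rcases hz with rfl | rfl
        · by_cases hne : u = u₀
          · subst hne
            exact absurd huz hu₀a
          · exact absurd (no_augment G M hM hcard hab hu hu₀ hne huz hu₀b) id
        · exact huz
  set F : Finset (Sym2 V) := M.edgeSet.toFinset with hF
  have hmemF : ∀ e : F, (e : Sym2 V) ∈ M.edgeSet := fun e =>
    Set.mem_toFinset.mp e.2
  set pick : F → V := fun e => (hchoice e (hmemF e)).choose with hpickdef
  have hpick : ∀ e : F, pick e ∈ (e : Sym2 V) ∧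
      ∀ u, u ∉ M.verts → (∃ z, z ∈ (e : Sym2 V) ∧ G.Adj u z) → G.Adj u (pick e) :=
    fun e => (hchoice e (hmemF e)).choose_spec
  refine ⟨Finset.image pick Finset.univ, ?_, ?_⟩
  · calc (Finset.image pick Finset.univ).card ≤ Finset.univ.card := Finset.card_image_le
    _ = F.card := by rw [Finset.card_univ, Fintype.card_coe]
    _ = matchingNumber G := by rw [hF, ← Set.ncard_eq_toFinset_card', hcard]
  · intro v hv
    by_cases hvM : v ∈ M.verts
    · obtain ⟨p, hp, -⟩ := hM hvM
      have he : s(v, p) ∈ M.edgeSet := SimpleGraph.Subgraph.mem_edgeSet.mpr hp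
      set e : F := ⟨s(v, p), Set.mem_toFinset.mpr he⟩ with hedef
      have hcC : pick e ∈ Finset.image pick Finset.univ :=
        Finset.mem_image.mpr ⟨e, Finset.mem_univ e, rfl⟩
      have hc := (hpick e).1
      rw [hedef, Sym2.mem_iff] at hc
      rcases hc with hc | hc
      · rw [hc] at hcC
        exact absurd hcC hv
      · refine ⟨pick e, hcC, ?_⟩
        rw [hc]
        exact M.adj_sub hp
    · obtain ⟨z, hz⟩ := h v
      have hzM : z ∈ M.verts := mem_verts_of_adj G M hM hcard hvM hz
      obtain ⟨p, hp, -⟩ := hM hzM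
      have he : s(z, p) ∈ M.edgeSet := SimpleGraph.Subgraph.mem_edgeSet.mpr hp
      set e : F := ⟨s(z, p), Set.mem_toFinset.mpr he⟩ with hedef
      have hcC : pick e ∈ Finset.image pick Finset.univ :=
        Finset.mem_image.mpr ⟨e, Finset.mem_univ e, rfl⟩
      refine ⟨pick e, hcC, ?_⟩
      exact (hpick e).2 v hvM ⟨z, by rw [hedef]; exact ⟨Sym2.mem_mk_left z p, hz⟩⟩

end AuxMatch

lemma countP_mono' {α : Type*} {p q : α → Prop} {ip : DecidablePred p} {iq : DecidablePred q}
    (s : Multiset α) (h : ∀ a, p a → q a) :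
    @Multiset.countP α p ip s ≤ @Multiset.countP α q iq s := by
  rw [Multiset.countP_eq_card_filter, Multiset.countP_eq_card_filter]
  exact Multiset.card_le_card (Multiset.monotone_filter_right _ h)

end Aux

/-- If `G` is a finite simple graph without isolated vertices, then the number of
signless Laplacian eigenvalues of `G` in `[0, 1)` is at most the matching number of
`G`. -/
theorem count_le_matchingNumber {V : Type*} [Fintype V] [DecidableEq V]
    (G : SimpleGraph V) (h : ∀ v : V, ∃ w, G.Adj v w) :
    qCount G (Set.Ico 0 1) ≤ matchingNumber G := by
  classical
  obtain ⟨C, hCcard, hCdom⟩ := AuxMatch.exists_cover G h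
  set Φ : (V → ℝ) →ₗ[ℝ] ({c // c ∈ C} → ℝ) :=
    LinearMap.funLeft ℝ ℝ (Subtype.val : {c // c ∈ C} → V) with hΦ
  set W := LinearMap.ker Φ with hW
  have hmemW : ∀ x : V → ℝ, x ∈ W ↔ ∀ c ∈ C, x c = 0 := by
    intro x
    rw [hW, LinearMap.mem_ker]
    constructor
    · intro hx c hc
      exact congrFun hx ⟨c, hc⟩
    · intro hx
      funext c
      exact hx c.1 c.2
  have hrank : Fintype.card V ≤ matchingNumber G + Module.finrank ℝ W := by
    have h1 := LinearMap.finrank_range_add_finrank_ker Φ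
    rw [Module.finrank_pi ℝ, ← hW] at h1
    have h2 : Module.finrank ℝ (LinearMap.range Φ) ≤ C.card := by
      have h3 := Submodule.finrank_le (LinearMap.range Φ)
      rwa [Module.finrank_pi ℝ, Fintype.card_coe] at h3
    omega
  have hpos : ∀ x ∈ W, (∑ v, x v ^ 2) ≤ x ⬝ᵥ sLap G *ᵥ x := fun x hx =>
    quad_ge G C hCdom x ((hmemW x).mp hx)
  have hherm := sLap_isHermitian G
  have hroots := charpoly_roots_eigenvalues (sLap G) hherm
  have hcount := countP_lt_one_le (sLap G) hherm (matchingNumber G) W hrank hpos hroots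
  refine le_trans ?_ hcount
  unfold qCount qSpec
  exact countP_mono' _ (fun r hr => hr.2)
end

section
/- Let G be a connected finite simple graph on n vertices and let ℓ be the length (number of edges) of a longest path of G. Then G has at least ⌊ℓ/2⌋ signless Laplacian eigenvalues (counted with multiplicity) in the half-open interval (2, 2n−2]. -/
open Matrix

section Aux
open Polynomial Finset

/- ### Part 1 : charpoly roots of a hermitian matrix -/

private lemma lpc_charpoly_diag {n : Type*} [Fintype n] [DecidableEq n] (v : n → ℝ) :
    (diagonal v).charpoly = ∏ i, (X - C (v i)) := by
  classical
  let e := (Fintype.equivFin n).symm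
  rw [← Matrix.charpoly_reindex e.symm]
  have hre : (reindex e.symm e.symm (diagonal v)) = diagonal (v ∘ e) := by
    ext i j
    by_cases h : i = j <;> simp [diagonal, Matrix.reindex_apply, Matrix.submatrix_apply, h]
  rw [hre, Matrix.charpoly_of_upperTriangular _ (Matrix.blockTriangular_diagonal _)]
  simp only [diagonal_apply_eq]
  simp only [Function.comp]
  exact Equiv.prod_comp e fun i => (X - C (v i))

private lemma lpc_herm_charpoly {n : Type*} [Fintype n] [DecidableEq n] {A : Matrix n n ℝ}
    (hA : A.IsHermitian) : A.charpoly = ∏ i, (X - C (hA.eigenvalues i)) := by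
  have hU := hA.spectral_theorem
  set U : Matrix n n ℝ := (hA.eigenvectorUnitary : Matrix n n ℝ) with hUdef
  have h1 : U * star U = 1 := (Matrix.mem_unitaryGroup_iff).mp hA.eigenvectorUnitary.2
  have hD : (RCLike.ofReal ∘ hA.eigenvalues : n → ℝ) = hA.eigenvalues := by
    funext i; simp
  rw [hD] at hU
  have key : A.charpoly = (diagonal hA.eigenvalues).charpoly := by
    unfold Matrix.charpoly
    have hcm : charmatrix A =
        (U.map C) * (charmatrix (diagonal hA.eigenvalues)) * ((star U).map C) := by
      unfold charmatrix
      simp only [RingHom.mapMatrix_apply]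
      rw [Matrix.mul_sub, Matrix.sub_mul]
      congr 1
      · rw [mul_assoc, scalar_commute (X : ℝ[X]) (fun r => (Commute.all _ _)) _,
          ← mul_assoc, ← Matrix.map_mul, h1, Matrix.map_one _ (map_zero C) (map_one C), one_mul]
      · rw [← Matrix.map_mul, ← Matrix.map_mul]; exact congrArg (Matrix.map · C) hU
    rw [hcm, det_mul, det_mul, mul_comm, ← mul_assoc, ← det_mul, ← Matrix.map_mul]
    rw [show (star U) * U = 1 from (Matrix.mem_unitaryGroup_iff').mp hA.eigenvectorUnitary.2]
    rw [Matrix.map_one _ (map_zero C) (map_one C), det_one, one_mul]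
  rw [key, lpc_charpoly_diag]

private lemma lpc_herm_roots {n : Type*} [Fintype n] [DecidableEq n] {A : Matrix n n ℝ}
    (hA : A.IsHermitian) :
    A.charpoly.roots = Multiset.map hA.eigenvalues Finset.univ.val := by
  rw [lpc_herm_charpoly hA]
  have : (∏ i, (X - C (hA.eigenvalues i))) =
      (Multiset.map (fun a => X - C a) (Multiset.map hA.eigenvalues Finset.univ.val)).prod := by
    rw [Multiset.map_map]; rfl
  rw [this, roots_multiset_prod_X_sub_C]

/- ### Part 2 : walk vertex injectivity -/

private lemma lpc_getVert_mem_support {V : Type*} {G : SimpleGraph V} {u v : V}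
    (p : G.Walk u v) (i : ℕ) : p.getVert i ∈ p.support := by
  induction p generalizing i with
  | nil => cases i <;> simp [SimpleGraph.Walk.getVert]
  | cons h q ih =>
    cases i with
    | zero => simp [SimpleGraph.Walk.getVert]
    | succ n => simp only [SimpleGraph.Walk.support_cons, List.mem_cons]; exact Or.inr (ih n)

private lemma lpc_getVert_inj {V : Type*} {G : SimpleGraph V} {u v : V} {p : G.Walk u v}
    (hp : p.IsPath) {i j : ℕ} (hi : i ≤ p.length) (hj : j ≤ p.length)
    (h : p.getVert i = p.getVert j) : i = j := by
  induction p generalizing i j with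
  | nil => simp only [SimpleGraph.Walk.length_nil, Nat.le_zero] at hi hj; omega
  | cons hadj q ih =>
    rename_i a b c
    rw [SimpleGraph.Walk.cons_isPath_iff] at hp
    cases i with
    | zero =>
      cases j with
      | zero => rfl
      | succ m =>
        exfalso
        apply hp.2
        rw [show (SimpleGraph.Walk.cons hadj q).getVert 0 = a from rfl] at h
        rw [SimpleGraph.Walk.getVert_cons_succ] at h
        rw [h]
        exact lpc_getVert_mem_support q m
    | succ n =>
      cases j with
      | zero =>
        exfalso
        apply hp.2
        rw [show (SimpleGraph.Walk.cons hadj q).getVert 0 = a from rfl] at h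
        rw [SimpleGraph.Walk.getVert_cons_succ] at h
        rw [← h]
        exact lpc_getVert_mem_support q n
      | succ m =>
        rw [SimpleGraph.Walk.getVert_cons_succ, SimpleGraph.Walk.getVert_cons_succ] at h
        simp only [SimpleGraph.Walk.length_cons] at hi hj
        exact congrArg Nat.succ (ih hp.1 (by omega) (by omega) h)

/- ### Part 3 : quadratic form of the signless Laplacian -/

variable {V : Type*} [Fintype V] [DecidableEq V] (G : SimpleGraph V) [DecidableRel G.Adj]

private lemma lpc_sLap_apply (u v : V) :
    sLap G u v = (if u = v then (G.degree u : ℝ) else 0) + (if G.Adj u v then 1 else 0) := by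
  by_cases h2 : u = v
  · subst h2; simp [sLap, SimpleGraph.adjMatrix, Matrix.diagonal]; congr!
  · simp [sLap, SimpleGraph.adjMatrix, Matrix.diagonal, h2]

private lemma lpc_sLap_isHermitian : (sLap G).IsHermitian := by
  ext i j
  simp only [conjTranspose_apply, lpc_sLap_apply, star_trivial]
  by_cases h : i = j
  · subst h; rfl
  · have hz : ∀ a b : V, ¬ a = b → (if a = b then (G.degree a : ℝ) else 0) = 0 := by
      intro a b hab; rw [if_neg hab]
    rw [hz _ _ h, hz _ _ (fun hh => h hh.symm)]
    by_cases hadj : G.Adj j i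
    · rw [if_pos hadj, if_pos hadj.symm]
    · rw [if_neg hadj, if_neg fun hh => hadj hh.symm]

private lemma lpc_degree_row_sum (u : V) :
    (G.degree u : ℝ) = ∑ v, (if G.Adj u v then (1:ℝ) else 0) := by
  simp [SimpleGraph.degree, SimpleGraph.neighborFinset_eq_filter, Finset.sum_boole]

private lemma lpc_sum_adj_left (x : V → ℝ) :
    ∑ u, ∑ v, (if G.Adj u v then (1:ℝ) else 0) * x u ^ 2
      = ∑ u, (G.degree u : ℝ) * x u ^ 2 := by
  refine Finset.sum_congr rfl fun u _ => ?_
  rw [← Finset.sum_mul, ← lpc_degree_row_sum]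

private lemma lpc_sum_adj_right (x : V → ℝ) :
    ∑ u, ∑ v, (if G.Adj u v then (1:ℝ) else 0) * x v ^ 2
      = ∑ u, (G.degree u : ℝ) * x u ^ 2 := by
  rw [Finset.sum_comm]
  refine Finset.sum_congr rfl fun v _ => ?_
  have hc : ∀ u, (if G.Adj u v then (1:ℝ) else 0) = if G.Adj v u then 1 else 0 := by
    intro u
    by_cases h : G.Adj u v
    · rw [if_pos h, if_pos h.symm]
    · rw [if_neg h, if_neg fun hh => h hh.symm]
  simp only [hc]
  rw [← Finset.sum_mul, ← lpc_degree_row_sum]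

private lemma lpc_quadform_eq (x : V → ℝ) :
    x ⬝ᵥ (sLap G *ᵥ x) =
      (∑ u, (G.degree u : ℝ) * x u ^ 2) + ∑ u, ∑ v, (if G.Adj u v then x u * x v else 0) := by
  simp only [dotProduct, mulVec, dotProduct, lpc_sLap_apply, Finset.mul_sum]
  rw [← Finset.sum_add_distrib]
  congr 1; funext u
  have : ∀ v, x u * (((if u = v then (G.degree u : ℝ) else 0) + (if G.Adj u v then 1 else 0)) * x v)
      = (if u = v then (G.degree u : ℝ) * x u ^2 else 0) + (if G.Adj u v then x u * x v else 0) := by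
    intro v
    by_cases h2 : u = v
    · subst h2; by_cases h : G.Adj u u <;> simp [h] <;> ring
    · by_cases h : G.Adj u v <;> simp [h, h2] <;> ring
  rw [Finset.sum_congr rfl (fun v _ => this v), Finset.sum_add_distrib,
    Finset.sum_ite_eq Finset.univ u _]
  simp

private lemma lpc_quadform_eq' (x : V → ℝ) :
    x ⬝ᵥ (sLap G *ᵥ x) =
      (1/2) * ∑ u, ∑ v, (if G.Adj u v then (x u + x v)^2 else 0) := by
  rw [lpc_quadform_eq]
  have expand : ∀ u v : V, (if G.Adj u v then (x u + x v)^2 else 0) =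
      (if G.Adj u v then (1:ℝ) else 0) * x u ^ 2 + (if G.Adj u v then (1:ℝ) else 0) * x v ^ 2
        + 2 * (if G.Adj u v then x u * x v else 0) := by
    intro u v; by_cases h : G.Adj u v <;> simp [h] <;> ring
  simp only [expand, Finset.sum_add_distrib]
  rw [lpc_sum_adj_left, lpc_sum_adj_right]
  simp only [← Finset.mul_sum]
  ring

/- ### Part 4 : spectral decomposition of the quadratic form -/

private lemma lpc_herm_symm {n : Type*} [Fintype n] {A : Matrix n n ℝ}
    (hA : A.IsHermitian) : Aᵀ = A := by
  ext i j
  have h2 := congrFun (congrFun hA i) j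
  simpa using h2

private lemma lpc_repr_eq_dot {n : Type*} [Fintype n] [DecidableEq n] {A : Matrix n n ℝ}
    (hA : A.IsHermitian) (y : EuclideanSpace ℝ n) (i : n) :
    hA.eigenvectorBasis.repr y i = ⇑(hA.eigenvectorBasis i) ⬝ᵥ ⇑y := by
  rw [OrthonormalBasis.repr_apply_apply]
  simp [PiLp.inner_apply, RCLike.inner_apply, dotProduct, starRingEnd_apply]
  exact Finset.sum_congr rfl fun _ _ => mul_comm _ _

private lemma lpc_repr_mulVec {n : Type*} [Fintype n] [DecidableEq n] {A : Matrix n n ℝ}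
    (hA : A.IsHermitian) (x : EuclideanSpace ℝ n) (i : n) :
    hA.eigenvectorBasis.repr (WithLp.toLp 2 (A *ᵥ x)) i
      = hA.eigenvalues i * hA.eigenvectorBasis.repr x i := by
  rw [lpc_repr_eq_dot, lpc_repr_eq_dot]
  have hv : ∀ w : n → ℝ, w ᵥ* A = A *ᵥ w := by
    intro w
    conv_lhs => rw [← lpc_herm_symm hA]
    rw [vecMul_transpose]
  show ⇑(hA.eigenvectorBasis i) ⬝ᵥ (A *ᵥ ⇑x) = _
  rw [Matrix.dotProduct_mulVec, hv _, hA.mulVec_eigenvectorBasis, smul_dotProduct]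
  rfl

private lemma lpc_quad_decomp {n : Type*} [Fintype n] [DecidableEq n] {A : Matrix n n ℝ}
    (hA : A.IsHermitian) (x : EuclideanSpace ℝ n) :
    ⇑x ⬝ᵥ (A *ᵥ ⇑x) =
      ∑ i, hA.eigenvalues i * (hA.eigenvectorBasis.repr x i)^2 := by
  have h1 : ⇑x ⬝ᵥ (A *ᵥ ⇑x) = (inner ℝ x (WithLp.toLp 2 (A *ᵥ ⇑x)) : ℝ) := by
    simp [PiLp.inner_apply, RCLike.inner_apply, dotProduct, starRingEnd_apply]
    exact Finset.sum_congr rfl fun _ _ => mul_comm _ _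
  rw [h1, ← hA.eigenvectorBasis.repr.inner_map_map x (WithLp.toLp 2 (A *ᵥ ⇑x))]
  rw [PiLp.inner_apply]
  refine Finset.sum_congr rfl fun i _ => ?_
  have h2 : (hA.eigenvectorBasis.repr (WithLp.toLp 2 (A *ᵥ ⇑x))) i
      = hA.eigenvalues i * hA.eigenvectorBasis.repr x i := lpc_repr_mulVec hA x i
  rw [h2]
  simp [RCLike.inner_apply, starRingEnd_apply]
  ring

private lemma lpc_norm_decomp {n : Type*} [Fintype n] [DecidableEq n] {A : Matrix n n ℝ}
    (hA : A.IsHermitian) (x : EuclideanSpace ℝ n) :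
    ∑ v, (x v)^2 = ∑ i, (hA.eigenvectorBasis.repr x i)^2 := by
  have h1 : ∑ v, (x v)^2 = (inner ℝ x x : ℝ) := by
    rw [PiLp.inner_apply]
    simp [PiLp.inner_apply, RCLike.inner_apply, starRingEnd_apply, sq]
  rw [h1, ← hA.eigenvectorBasis.repr.inner_map_map x x, PiLp.inner_apply]
  refine Finset.sum_congr rfl fun i _ => ?_
  simp [RCLike.inner_apply, starRingEnd_apply, sq]

/- ### Part 5 : eigenvalue upper bound -/

private lemma lpc_eig_le (hQ : (sLap G).IsHermitian) (i : V) :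
    hQ.eigenvalues i ≤ 2 * (Fintype.card V : ℝ) - 2 := by
  set x : EuclideanSpace ℝ V := hQ.eigenvectorBasis i with hx
  have hxnorm : ∑ v, (x v)^2 = 1 := by
    rw [lpc_norm_decomp hQ]
    simp [hx, OrthonormalBasis.repr_self, EuclideanSpace.single_apply]
  have hquad : ⇑x ⬝ᵥ (sLap G *ᵥ ⇑x) = hQ.eigenvalues i := by
    rw [lpc_quad_decomp hQ]
    simp [hx, OrthonormalBasis.repr_self, EuclideanSpace.single_apply]
  rw [← hquad, lpc_quadform_eq' G ⇑x]
  change (1/2 * ∑ u, ∑ v, (if G.Adj u v then ((x u) + (x v))^2 else 0) : ℝ) ≤ _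
  have hbound : ∑ u, ∑ v, (if G.Adj u v then ((x u) + (x v))^2 else 0)
      ≤ ∑ u, ∑ v, (2*((if G.Adj u v then (1:ℝ) else 0) * (x u)^2)
          + 2*((if G.Adj u v then (1:ℝ) else 0) * (x v)^2)) := by
    refine Finset.sum_le_sum fun u _ => Finset.sum_le_sum fun v _ => ?_
    by_cases h : G.Adj u v
    · simp only [if_pos h]; nlinarith [sq_nonneg ((x u) - (x v))]
    · simp [h]
  have hdeg : ∑ u, (G.degree u : ℝ) * (x u) ^ 2
      ≤ ((Fintype.card V : ℝ) - 1) * ∑ u, (x u)^2 := by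
    rw [Finset.mul_sum]
    refine Finset.sum_le_sum fun u _ => ?_
    have h1 : (G.degree u : ℝ) ≤ (Fintype.card V : ℝ) - 1 := by
      have := G.degree_lt_card_verts u
      have h2 : (G.degree u : ℝ) + 1 ≤ (Fintype.card V : ℝ) := by exact_mod_cast this
      linarith
    nlinarith [sq_nonneg (x u)]
  have hsplit : ∑ u, ∑ v, (2*((if G.Adj u v then (1:ℝ) else 0) * (x u)^2)
          + 2*((if G.Adj u v then (1:ℝ) else 0) * (x v)^2))
      = 4 * ∑ u, (G.degree u : ℝ) * (x u) ^ 2 := by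
    simp only [Finset.sum_add_distrib, ← Finset.mul_sum]
    rw [lpc_sum_adj_left, lpc_sum_adj_right]
    ring
  rw [hsplit] at hbound
  have := hxnorm
  nlinarith [hbound, hdeg]

end Aux

/-- Let `G` be a connected finite simple graph on `n` vertices and `ℓ` the length of a
longest path of `G`. Then `G` has at least `⌊ℓ/2⌋` signless Laplacian eigenvalues in
`(2, 2n-2]`. -/
theorem longestPath_count {V : Type*} [Fintype V] [DecidableEq V]
    (G : SimpleGraph V) (ℓ : ℕ) (hconn : G.Connected)
    (hex : ∃ (u v : V) (p : G.Walk u v), p.IsPath ∧ p.length = ℓ)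
    (hmax : ∀ (u v : V) (p : G.Walk u v), p.IsPath → p.length ≤ ℓ) :
    ℓ / 2 ≤ qCount G (Set.Ioc 2 (2 * (Fintype.card V : ℝ) - 2)) := by
  classical
  letI : DecidableRel G.Adj := Classical.decRel G.Adj
  obtain ⟨u0, v0, p, hp, hlen⟩ := hex
  set k := ℓ / 2 with hk
  rcases Nat.eq_zero_or_pos k with hk0 | hkpos
  · rw [hk0]; exact Nat.zero_le _
  have hl2 : 2 * k ≤ ℓ := by omega
  have hQ : (sLap G).IsHermitian := lpc_sLap_isHermitian G
  set lam := hQ.eigenvalues with hlam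
  set b := hQ.eigenvectorBasis with hb
  have hEigLe : ∀ i, lam i ≤ 2 * (Fintype.card V : ℝ) - 2 := fun i => lpc_eig_le G hQ i
  -- rewrite the count
  have hcount : qCount G (Set.Ioc 2 (2 * (Fintype.card V : ℝ) - 2))
      = (Finset.univ.filter fun i => 2 < lam i).card := by
    unfold qCount qSpec
    rw [lpc_herm_roots hQ, Multiset.countP_map]
    have hiff : ∀ i : V,
        (lam i ∈ Set.Ioc 2 (2 * (Fintype.card V : ℝ) - 2)) ↔ 2 < lam i :=
      fun i => ⟨fun h => h.1, fun h => ⟨h, hEigLe i⟩⟩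
    rw [← Multiset.countP_eq_card_filter, Finset.card_def, Finset.filter_val,
      ← Multiset.countP_eq_card_filter]
    have hcc := Multiset.countP_congr
      (p := fun a => hQ.eigenvalues a ∈ Set.Ioc 2 (2 * (Fintype.card V : ℝ) - 2))
      (p' := fun i => 2 < lam i) (s := Finset.univ.val) (s' := Finset.univ.val)
      rfl fun i _ => propext (hiff i)
    convert hcc using 2
  rw [hcount]
  set S := Finset.univ.filter fun i => 2 < lam i with hS
  by_contra hcon
  push_neg at hcon
  -- the path vertices
  set vert : ℕ → V := p.getVert with hvert
  have hvinj : ∀ {i j : ℕ}, i ≤ ℓ → j ≤ ℓ → vert i = vert j → i = j := by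
    intro i j hi hj h
    exact lpc_getVert_inj hp (by omega) (by omega) h
  have hadj : ∀ j, j < ℓ → G.Adj (vert j) (vert (j+1)) := by
    intro j hj
    exact p.adj_getVert_succ (by omega)
  -- the test vectors
  set w : Fin k → V → ℝ := fun i u =>
    (if u = vert (2*(i:ℕ)+1) then 1 else 0) + (if u = vert (2*(i:ℕ)+2) then 1 else 0) with hw
  set X : (Fin k → ℝ) →ₗ[ℝ] EuclideanSpace ℝ V :=
    { toFun := fun c => WithLp.toLp 2 (fun u => ∑ i, c i * w i u : V → ℝ)
      map_add' := by
        intro c d; ext u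
        simp [add_mul, Finset.sum_add_distrib]
      map_smul' := by
        intro r c; ext u
        simp [mul_assoc, Finset.mul_sum] } with hX
  set F : (Fin k → ℝ) →ₗ[ℝ] ({i // i ∈ S} → ℝ) :=
    { toFun := fun c => fun i => b.repr (X c) i.1
      map_add' := by intro c d; funext i; simp
      map_smul' := by intro r c; funext i; simp } with hF
  have hFnotinj : ¬ Function.Injective F := by
    intro hinj
    have h1 := LinearMap.finrank_le_finrank_of_injective hinj
    rw [Module.finrank_pi ℝ, Module.finrank_pi ℝ] at h1
    simp only [Fintype.card_fin, Fintype.card_coe] at h1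
    omega
  obtain ⟨c1, c2, hc12, hcne⟩ : ∃ c1 c2, F c1 = F c2 ∧ c1 ≠ c2 := by
    by_contra h
    push_neg at h
    exact hFnotinj fun a b hab => h a b hab
  set c := c1 - c2 with hc
  have hcne0 : c ≠ 0 := sub_ne_zero.mpr hcne
  have hFc : F c = 0 := by rw [hc, map_sub, hc12, sub_self]
  set x : EuclideanSpace ℝ V := X c with hxdef
  have hxS : ∀ i : V, 2 < lam i → b.repr x i = 0 := by
    intro i hi
    have := congrFun hFc ⟨i, by simp [hS, hi]⟩
    exact this
  -- upper bound
  have hup : ⇑x ⬝ᵥ (sLap G *ᵥ ⇑x) ≤ 2 * ∑ v, (x v)^2 := by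
    rw [lpc_quad_decomp hQ, lpc_norm_decomp hQ, Finset.mul_sum]
    refine Finset.sum_le_sum fun i _ => ?_
    by_cases hi : 2 < lam i
    · rw [hxS i hi]; simp
    · push_neg at hi
      exact mul_le_mul_of_nonneg_right hi (sq_nonneg _)
  -- evaluations
  have hxeval : ∀ u : V, x u = ∑ i, c i * w i u := fun u => rfl
  have heval : ∀ j, j ≤ ℓ → x (vert j) =
      ∑ i : Fin k, c i * ((if j = 2*(i:ℕ)+1 then (1:ℝ) else 0)
        + (if j = 2*(i:ℕ)+2 then 1 else 0)) := by
    intro j hj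
    rw [hxeval]
    refine Finset.sum_congr rfl fun i _ => ?_
    have hik := i.2
    have e1 : (vert j = vert (2*(i:ℕ)+1)) ↔ j = 2*(i:ℕ)+1 :=
      ⟨fun h => hvinj hj (by omega) h, fun h => by rw [h]⟩
    have e2 : (vert j = vert (2*(i:ℕ)+2)) ↔ j = 2*(i:ℕ)+2 :=
      ⟨fun h => hvinj hj (by omega) h, fun h => by rw [h]⟩
    rw [hw]
    simp only []
    rw [if_congr e1 rfl rfl, if_congr e2 rfl rfl]
  have hval1 : ∀ i : Fin k, x (vert (2*(i:ℕ)+1)) = c i := by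
    intro i
    have hik := i.2
    rw [heval _ (by omega), Finset.sum_eq_single i]
    · rw [if_pos rfl, if_neg (by omega)]; ring
    · intro i' _ hne
      rw [if_neg (fun h => hne (Fin.ext (by omega))), if_neg (by omega)]
      ring
    · intro h; exact absurd (Finset.mem_univ i) h
  have hval2 : ∀ i : Fin k, x (vert (2*(i:ℕ)+2)) = c i := by
    intro i
    have hik := i.2
    rw [heval _ (by omega), Finset.sum_eq_single i]
    · rw [if_pos rfl, if_neg (by omega)]; ring
    · intro i' _ hne
      rw [if_neg (by omega), if_neg (fun h => hne (Fin.ext (by omega)))]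
      ring
    · intro h; exact absurd (Finset.mem_univ i) h
  have hval0 : x (vert 0) = 0 := by
    rw [heval 0 (by omega)]
    refine Finset.sum_eq_zero fun i _ => ?_
    rw [if_neg (by omega), if_neg (by omega)]
    ring
  -- norm of x
  have hdelta : ∀ a b : V, (∑ v, (if v = a then (1:ℝ) else 0) * (if v = b then 1 else 0))
      = if a = b then 1 else 0 := by
    intro a b
    have hterm : ∀ v : V, (if v = a then (1:ℝ) else 0) * (if v = b then 1 else 0)
        = if v = a then (if a = b then (1:ℝ) else 0) else 0 := by
      intro v
      by_cases hv : v = a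
      · subst hv; simp
      · simp [hv]
    rw [Finset.sum_congr rfl fun v _ => hterm v, Finset.sum_ite_eq' Finset.univ a,
      if_pos (Finset.mem_univ a)]
  have hVC : ∀ a b2 : ℕ, a ≤ ℓ → b2 ≤ ℓ →
      ((if vert a = vert b2 then (1:ℝ) else 0) = if a = b2 then 1 else 0) := by
    intro a b2 ha hb2
    have : (vert a = vert b2) ↔ a = b2 := ⟨fun h => hvinj ha hb2 h, fun h => by rw [h]⟩
    rw [if_congr this rfl rfl]
  have hw_inner : ∀ i i' : Fin k, (∑ v, w i v * w i' v) = if i = i' then 2 else 0 := by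
    intro i i'
    have hik := i.2
    have hik' := i'.2
    have hcalc : (∑ v, w i v * w i' v) =
        (if vert (2*(i:ℕ)+1) = vert (2*(i':ℕ)+1) then (1:ℝ) else 0)
        + (if vert (2*(i:ℕ)+1) = vert (2*(i':ℕ)+2) then 1 else 0)
        + ((if vert (2*(i:ℕ)+2) = vert (2*(i':ℕ)+1) then 1 else 0)
        + (if vert (2*(i:ℕ)+2) = vert (2*(i':ℕ)+2) then 1 else 0)) := by
      have hterm : ∀ v, w i v * w i' v =
          (if v = vert (2*(i:ℕ)+1) then (1:ℝ) else 0) * (if v = vert (2*(i':ℕ)+1) then 1 else 0)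
          + (if v = vert (2*(i:ℕ)+1) then (1:ℝ) else 0) * (if v = vert (2*(i':ℕ)+2) then 1 else 0)
          + ((if v = vert (2*(i:ℕ)+2) then (1:ℝ) else 0) * (if v = vert (2*(i':ℕ)+1) then 1 else 0)
          + (if v = vert (2*(i:ℕ)+2) then (1:ℝ) else 0) * (if v = vert (2*(i':ℕ)+2) then 1 else 0)) := by
        intro v; rw [hw]; ring
      rw [Finset.sum_congr rfl fun v _ => hterm v]
      simp only [Finset.sum_add_distrib]
      rw [hdelta, hdelta, hdelta, hdelta]
    rw [hcalc, hVC _ _ (by omega) (by omega), hVC _ _ (by omega) (by omega),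
      hVC _ _ (by omega) (by omega), hVC _ _ (by omega) (by omega)]
    by_cases hii : i = i'
    · subst hii
      rw [if_pos (rfl : (2*(i:ℕ)+1) = 2*(i:ℕ)+1),
        if_pos (rfl : (2*(i:ℕ)+2) = 2*(i:ℕ)+2),
        if_pos (rfl : i = i),
        if_neg (show ¬(2*(i:ℕ)+1 = 2*(i:ℕ)+2) by omega),
        if_neg (show ¬(2*(i:ℕ)+2 = 2*(i:ℕ)+1) by omega)]
      norm_num
    · have hne : (i:ℕ) ≠ (i':ℕ) := fun h => hii (Fin.ext h)
      rw [if_neg hii,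
        if_neg (show ¬(2*(i:ℕ)+1 = 2*(i':ℕ)+1) by omega),
        if_neg (show ¬(2*(i:ℕ)+1 = 2*(i':ℕ)+2) by omega),
        if_neg (show ¬(2*(i:ℕ)+2 = 2*(i':ℕ)+1) by omega),
        if_neg (show ¬(2*(i:ℕ)+2 = 2*(i':ℕ)+2) by omega)]
      norm_num
  have hnorm : ∑ v, (x v)^2 = 2 * ∑ i, (c i)^2 := by
    have step1 : ∑ v, (x v)^2 = ∑ v, ∑ i, ∑ i', (c i * c i') * (w i v * w i' v) := by
      refine Finset.sum_congr rfl fun v _ => ?_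
      rw [hxeval v, sq, Finset.sum_mul_sum]
      exact Finset.sum_congr rfl fun i _ => Finset.sum_congr rfl fun i' _ => by ring
    have step2 : ∑ v, ∑ i, ∑ i', (c i * c i') * (w i v * w i' v)
        = ∑ i, ∑ i', (c i * c i') * ∑ v, (w i v * w i' v) := by
      rw [Finset.sum_comm]
      refine Finset.sum_congr rfl fun i _ => ?_
      rw [Finset.sum_comm]
      exact Finset.sum_congr rfl fun i' _ => by rw [Finset.mul_sum]
    rw [step1, step2]
    simp only [hw_inner]
    have step3 : ∀ i : Fin k, ∑ i', (c i * c i') * (if i = i' then (2:ℝ) else 0)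
        = 2 * (c i)^2 := by
      intro i
      rw [Finset.sum_eq_single i]
      · rw [if_pos rfl]; ring
      · intro i' _ hne; rw [if_neg (fun h => hne h.symm)]; ring
      · intro h; exact absurd (Finset.mem_univ i) h
    rw [Finset.sum_congr rfl fun i _ => step3 i, ← Finset.mul_sum]
  -- lower bound on the quadratic form via the path edges
  have hedges : (2:ℝ) * ∑ j ∈ Finset.range ℓ, (x (vert j) + x (vert (j+1)))^2
      ≤ ∑ u, ∑ v, (if G.Adj u v then (x u + x v)^2 else 0) := by
    set f : V × V → ℝ := fun q => if G.Adj q.1 q.2 then (x q.1 + x q.2)^2 else 0 with hf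
    have hsum : ∑ u, ∑ v, (if G.Adj u v then (x u + x v)^2 else 0) = ∑ q : V × V, f q := by
      rw [← Finset.univ_product_univ, Finset.sum_product]
    set T1 := (Finset.range ℓ).image (fun j => (vert j, vert (j+1))) with hT1
    set T2 := (Finset.range ℓ).image (fun j => (vert (j+1), vert j)) with hT2
    have hinj1 : ∀ a ∈ Finset.range ℓ, ∀ b2 ∈ Finset.range ℓ,
        (vert a, vert (a+1)) = (vert b2, vert (b2+1)) → a = b2 := by
      intro a ha b2 hb2 h
      rw [Finset.mem_range] at ha hb2
      exact hvinj (by omega) (by omega) (congrArg Prod.fst h)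
    have hinj2 : ∀ a ∈ Finset.range ℓ, ∀ b2 ∈ Finset.range ℓ,
        (vert (a+1), vert a) = (vert (b2+1), vert b2) → a = b2 := by
      intro a ha b2 hb2 h
      rw [Finset.mem_range] at ha hb2
      exact hvinj (by omega) (by omega) (congrArg Prod.snd h)
    have hd : Disjoint T1 T2 := by
      rw [Finset.disjoint_left]
      intro q hq1 hq2
      obtain ⟨a, ha, rfl⟩ := Finset.mem_image.mp hq1
      obtain ⟨b2, hb2, h⟩ := Finset.mem_image.mp hq2
      rw [Finset.mem_range] at ha hb2
      have h1 : vert (b2+1) = vert a := congrArg Prod.fst h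
      have h2 : vert b2 = vert (a+1) := congrArg Prod.snd h
      have e1 : b2 + 1 = a := hvinj (by omega) (by omega) h1
      have e2 : b2 = a + 1 := hvinj (by omega) (by omega) h2
      omega
    calc (2:ℝ) * ∑ j ∈ Finset.range ℓ, (x (vert j) + x (vert (j+1)))^2
        = ∑ q ∈ T1 ∪ T2, f q := by
          rw [Finset.sum_union hd, hT1, hT2, Finset.sum_image hinj1, Finset.sum_image hinj2]
          have e1 : ∀ j ∈ Finset.range ℓ, f (vert j, vert (j+1))
              = (x (vert j) + x (vert (j+1)))^2 := by
            intro j hj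
            rw [Finset.mem_range] at hj
            simp only [hf]
            rw [if_pos (hadj j hj)]
          have e2 : ∀ j ∈ Finset.range ℓ, f (vert (j+1), vert j)
              = (x (vert j) + x (vert (j+1)))^2 := by
            intro j hj
            rw [Finset.mem_range] at hj
            simp only [hf]
            rw [if_pos (hadj j hj).symm]
            ring
          rw [Finset.sum_congr rfl e1, Finset.sum_congr rfl e2]
          ring
      _ ≤ ∑ q : V × V, f q := by
          refine Finset.sum_le_sum_of_subset_of_nonneg (Finset.subset_univ _) fun q _ _ => ?_
          simp only [hf]
          split_ifs <;> positivity
      _ = ∑ u, ∑ v, (if G.Adj u v then (x u + x v)^2 else 0) := hsum.symm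
  -- minimal nonzero coordinate
  have hex0 : ∃ j : ℕ, ∃ h : j < k, c ⟨j, h⟩ ≠ 0 := by
    by_contra h
    push_neg at h
    apply hcne0
    funext i
    exact h i.1 i.2
  set m := Nat.find hex0 with hm
  obtain ⟨hmk, hcm⟩ := Nat.find_spec hex0
  have hmin : ∀ j (hj : j < k), j < m → c ⟨j, hj⟩ = 0 := by
    intro j hj hjm
    by_contra hne
    exact (Nat.find_min hex0 hjm) ⟨hj, hne⟩
  have hx2m : x (vert (2*m)) = 0 := by
    by_cases hm0 : m = 0
    · rw [hm0, show 2*0 = 0 from rfl]; exact hval0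
    · have hm' : m - 1 < k := by omega
      have he : 2*m = 2*(((⟨m-1, hm'⟩ : Fin k)):ℕ)+2 := by simp; omega
      rw [he, hval2 ⟨m-1, hm'⟩]
      exact hmin (m-1) hm' (by omega)
  -- selected edges lower bound
  have hselect : (∑ i : Fin k, 4*(c i)^2) + (c ⟨m,hmk⟩)^2
      ≤ ∑ j ∈ Finset.range ℓ, (x (vert j) + x (vert (j+1)))^2 := by
    set J : Finset ℕ := insert (2*m) (Finset.image (fun i : Fin k => 2*(i:ℕ)+1) Finset.univ)
      with hJ
    have hJsub : J ⊆ Finset.range ℓ := by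
      intro j hj
      rw [Finset.mem_range]
      rw [hJ, Finset.mem_insert] at hj
      rcases hj with rfl | hj
      · omega
      · obtain ⟨i, _, rfl⟩ := Finset.mem_image.mp hj
        have := i.2; omega
    have hnotmem : 2*m ∉ Finset.image (fun i : Fin k => 2*(i:ℕ)+1) Finset.univ := by
      intro h
      obtain ⟨i, _, he⟩ := Finset.mem_image.mp h
      omega
    have himg : ∀ a ∈ Finset.univ, ∀ b2 ∈ Finset.univ,
        (fun i : Fin k => 2*(i:ℕ)+1) a = (fun i : Fin k => 2*(i:ℕ)+1) b2 → a = b2 := by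
      intro a _ b2 _ h
      simp only at h
      exact Fin.ext (by omega)
    have hJval : ∑ j ∈ J, (x (vert j) + x (vert (j+1)))^2
        = (∑ i : Fin k, 4*(c i)^2) + (c ⟨m,hmk⟩)^2 := by
      rw [hJ, Finset.sum_insert hnotmem, Finset.sum_image himg]
      have hterm : ∀ i : Fin k, (x (vert (2*(i:ℕ)+1)) + x (vert (2*(i:ℕ)+1+1)))^2
          = 4*(c i)^2 := by
        intro i
        rw [show 2*(i:ℕ)+1+1 = 2*(i:ℕ)+2 from rfl, hval1 i, hval2 i]
        ring
      rw [Finset.sum_congr rfl fun i _ => hterm i]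
      rw [show 2*m+1 = 2*(((⟨m,hmk⟩ : Fin k)):ℕ)+1 from by simp, hx2m, hval1 ⟨m,hmk⟩]
      ring
    rw [← hJval]
    exact Finset.sum_le_sum_of_subset_of_nonneg hJsub fun _ _ _ => sq_nonneg _
  -- put everything together
  have hquadlow : 2 * (2 * ∑ i, (c i)^2) + (c ⟨m,hmk⟩)^2 ≤ ⇑x ⬝ᵥ (sLap G *ᵥ ⇑x) := by
    rw [lpc_quadform_eq' G ⇑x]
    change _ ≤ (1/2 * ∑ u, ∑ v, (if G.Adj u v then ((x u) + (x v))^2 else 0) : ℝ)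
    have h4 : ∑ i : Fin k, 4*(c i)^2 = 4 * ∑ i, (c i)^2 := by
      rw [Finset.mul_sum]
    rw [h4] at hselect
    linarith [hedges, hselect]
  have hcmpos : (0:ℝ) < (c ⟨m,hmk⟩)^2 := by
    rcases lt_or_gt_of_ne hcm with h | h
    · have h2 : (0:ℝ) < -(c ⟨m,hmk⟩) := by linarith
      have h3 := pow_pos h2 2
      calc (0:ℝ) < (-(c ⟨m,hmk⟩))^2 := h3
        _ = (c ⟨m,hmk⟩)^2 := by ring
    · exact pow_pos h 2
  rw [hnorm] at hup
  linarith [hup, hquadlow, hcmpos]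
end
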